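/- arXiv:2301.10805 — 2 statements merged into one kernel-verified Lean document; each statement's English description precedes it below -/
import Mathlib

section
/- A connected chordal graph G is a k-tree if and only if every maximal clique of G has cardinality k+1 and every minimal vertex separator of G has cardinality k. -/
open Finset

noncomputable section

namespace Paper

variable {V W : Type}

/-- `Q` is a maximal clique of `G`. -/
def IsMaxClique (G : SimpleGraph V) (Q : Finset V) : Prop :=
  G.IsClique (Q : Set V) ∧ ∀ R : Finset V, G.IsClique (R : Set V) → Q ⊆ R → Q = R

/-- `G` is chordal: every cycle of length at least 4 has a chord, i.e. an edge of `G`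
joining two vertices of the cycle which is not an edge of the cycle. -/
def IsChordal (G : SimpleGraph V) : Prop :=
  ∀ (v : V) (w : G.Walk v v), w.IsCycle → 4 ≤ w.length →
    ∃ a b, a ∈ w.support ∧ b ∈ w.support ∧ G.Adj a b ∧ s(a, b) ∉ w.edges

/-- `S` is a `uv`-separator: `u, v` are distinct non-adjacent vertices outside `S`, and every
walk from `u` to `v` meets `S`. -/
def IsUVSeparator (G : SimpleGraph V) (u v : V) (S : Finset V) : Prop :=
  u ≠ v ∧ ¬ G.Adj u v ∧ u ∉ S ∧ v ∉ S ∧ ∀ p : G.Walk u v, ∃ x ∈ p.support, x ∈ S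

/-- `S` is a minimal vertex separator of `G`: a minimal `uv`-separator for some pair `u,v`. -/
def IsMinSep (G : SimpleGraph V) (S : Finset V) : Prop :=
  ∃ u v, IsUVSeparator G u v S ∧ ∀ T ⊆ S, IsUVSeparator G u v T → T = S

variable [DecidableEq V]

/-- Distinct maximal cliques `Q, Q'` form a separating pair: `Q ∩ Q' ≠ ∅` and every path from
`Q \ Q'` to `Q' \ Q` meets `Q ∩ Q'`. -/
def SeparatingPair (G : SimpleGraph V) (Q Q' : Finset V) : Prop :=
  IsMaxClique G Q ∧ IsMaxClique G Q' ∧ Q ≠ Q' ∧ (Q ∩ Q').Nonempty ∧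
    ∀ u ∈ Q \ Q', ∀ v ∈ Q' \ Q, ∀ p : G.Walk u v, ∃ x ∈ p.support, x ∈ Q ∩ Q'

/-- The reduced clique graph: vertices are maximal cliques, adjacent iff they form a
separating pair. -/
def reducedCliqueGraph (G : SimpleGraph V) :
    SimpleGraph {Q : Finset V // IsMaxClique G Q} :=
  SimpleGraph.fromRel (fun Q Q' => SeparatingPair G Q.1 Q'.1)

/-- The clique-intersection graph: vertices are maximal cliques, adjacent iff they intersect. -/
def cliqueIntersectionGraph (G : SimpleGraph V) :
    SimpleGraph {Q : Finset V // IsMaxClique G Q} :=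
  SimpleGraph.fromRel (fun Q Q' => (Q.1 ∩ Q'.1).Nonempty)

/-- The `j`-line graph of `G`: vertices are the `j`-cliques of `G`, two adjacent iff they share
`j - 1` vertices. -/
def kLineGraph (j : ℕ) (G : SimpleGraph V) :
    SimpleGraph {s : Finset V // G.IsNClique j s} :=
  SimpleGraph.fromRel (fun s t => (s.1 ∩ t.1).card = j - 1)

/-- `G` is a `k`-tree: there is a construction ordering of all the vertices in which the first
`k+1` vertices form a clique and every later vertex is adjacent (among earlier vertices)
exactly to the vertices of a `k`-clique. -/
def IsKTree [Fintype V] (k : ℕ) (G : SimpleGraph V) : Prop :=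
  ∃ (n : ℕ) (σ : Fin n ≃ V), k + 1 ≤ n ∧
    (∀ i j : Fin n, (i : ℕ) < j → (j : ℕ) < k + 1 → G.Adj (σ i) (σ j)) ∧
    (∀ j : Fin n, k + 1 ≤ (j : ℕ) →
      ∃ s : Finset V, G.IsNClique k s ∧
        ∀ v : V, v ∈ s ↔ ∃ i : Fin n, (i : ℕ) < j ∧ v = σ i ∧ G.Adj (σ j) v)

/-- `T` is a spanning tree of `H`. -/
def IsSpanningTree (H T : SimpleGraph W) : Prop := T ≤ H ∧ T.IsTree

/-- The number of spanning trees of `H`. -/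
def numSpanningTrees (H : SimpleGraph W) : ℕ :=
  Nat.card {T : SimpleGraph W // T ≤ H ∧ T.IsTree}

/-- The intersection of the two endpoints of an edge of a graph on maximal cliques. -/
def interFinset (G : SimpleGraph V) (e : Sym2 {Q : Finset V // IsMaxClique G Q}) : Finset V :=
  Sym2.lift ⟨fun Q Q' => Q.1 ∩ Q'.1, fun _ _ => Finset.inter_comm _ _⟩ e

/-- The weight of a tree on the maximal cliques of `G`: the sum over its edges of the
cardinalities of the intersections of the endpoints. -/
def treeWeight (G : SimpleGraph V) (T : SimpleGraph {Q : Finset V // IsMaxClique G Q}) : ℕ :=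
  ∑ᶠ e ∈ T.edgeSet, (interFinset G e).card

/-- `T` is a clique tree of `G`: a maximum-weight spanning tree of the clique-intersection
graph of `G`. -/
def IsCliqueTree (G : SimpleGraph V) (T : SimpleGraph {Q : Finset V // IsMaxClique G Q}) : Prop :=
  T ≤ cliqueIntersectionGraph G ∧ T.IsTree ∧
    ∀ T', T' ≤ cliqueIntersectionGraph G → T'.IsTree → treeWeight G T' ≤ treeWeight G T

/-- The multiplicity of `S` relative to a clique tree `T`: the number of edges of `T` whose
endpoint cliques intersect exactly in `S`. -/
def mult (G : SimpleGraph V) (T : SimpleGraph {Q : Finset V // IsMaxClique G Q})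
    (S : Finset V) : ℕ :=
  Nat.card {e : Sym2 {Q : Finset V // IsMaxClique G Q} // e ∈ T.edgeSet ∧ interFinset G e = S}

/-- `B` is a block of `G`: a maximal set of vertices inducing a connected subgraph with no
cut vertex. -/
def IsBlock (G : SimpleGraph V) (B : Set V) : Prop :=
  (G.induce B).Connected ∧ (∀ v ∈ B, B ≠ {v} → (G.induce (B \ {v})).Connected) ∧
    ∀ C : Set V, B ⊆ C → (G.induce C).Connected →
      (∀ v ∈ C, C ≠ {v} → (G.induce (C \ {v})).Connected) → B = C

/-- `G` is a block graph: every block of `G` is a clique. -/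
def IsBlockGraph (G : SimpleGraph V) : Prop :=
  ∀ B : Set V, IsBlock G B → G.IsClique B

/-- `G` has no induced `K_{1,r}`. -/
def K1rFree (r : ℕ) (G : SimpleGraph V) : Prop :=
  ¬ ∃ (c : V) (s : Finset V), s.card = r ∧ c ∉ s ∧ (∀ v ∈ s, G.Adj c v) ∧
      ∀ v ∈ s, ∀ w ∈ s, v ≠ w → ¬ G.Adj v w

/-- The `k`-star with `n + k` vertices: a clique on the first `k` vertices, with each of the
other `n` vertices adjacent exactly to the vertices of that clique. -/
def kStar (k n : ℕ) : SimpleGraph (Fin (n + k)) :=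
  SimpleGraph.fromRel (fun a _ => (a : ℕ) < k)

end Paper

/-!
In a `k`-tree every clique lies in a `(k+1)`-clique: the initial one, or the vertex of the clique
added last together with the `k`-clique it was attached to. So all maximal cliques have `k + 1`
vertices. Let `S` be a minimal `uv`-separator. In a chordal graph `S` is a clique, and some vertex
of the component of `u` is adjacent to all of `S`, whence `|S| ≤ k`. One of the components of `u`
and `v` misses the initial clique; its earliest vertex was attached to `k` vertices, all of them in
`S`, whence `|S| ≥ k`.

For the converse, a non-complete chordal graph has a simplicial vertex `x` (Dirac). Its
neighbourhood `N` lies in the unique maximal clique `N ∪ {x}` through `x`, so `|N| = k`; `N`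
separates `x` from any non-neighbour and, having `k` vertices, is a minimal separator, so some
vertex outside `N ∪ {x}` is adjacent to all of `N`. Hence `G - x` still has all maximal cliques of
size `k + 1` and all minimal separators of size `k`, is a `k`-tree by induction, and `G` arises from
it by attaching `x` to the `k`-clique `N`.
-/

namespace SimpleGraph

variable {V : Type*} {G : SimpleGraph V} {u v w x z : V} {A B S T : Finset V}

namespace Walk

-- Induced subgraphs `G[A]` are handled through walks, reachability, separators and cliques
-- relative to a vertex set `A` of `G`.
def Within (p : G.Walk u v) (A : Finset V) : Prop := ∀ x ∈ p.support, x ∈ A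

theorem Within.mono {p : G.Walk u v} (hp : p.Within A) (h : A ⊆ B) : p.Within B :=
  fun x hx => h (hp x hx)

theorem Within.start_mem {p : G.Walk u v} (hp : p.Within A) : u ∈ A :=
  hp u p.start_mem_support

theorem Within.end_mem {p : G.Walk u v} (hp : p.Within A) : v ∈ A :=
  hp v p.end_mem_support

theorem Within.reverse {p : G.Walk u v} (hp : p.Within A) : p.reverse.Within A :=
  fun x hx => hp x (by rwa [Walk.support_reverse, List.mem_reverse] at hx)

theorem Within.append {p : G.Walk u v} {q : G.Walk v w} (hp : p.Within A) (hq : q.Within A) :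
    (p.append q).Within A := fun x hx => (p.mem_support_append_iff q).1 hx |>.elim (hp x) (hq x)

theorem Within.takeUntil [DecidableEq V] {p : G.Walk u v} (hp : p.Within A) (hw : w ∈ p.support) :
    (p.takeUntil w hw).Within A :=
  fun x hx => hp x (p.support_takeUntil_subset_support hw hx)

theorem Within.of_support_subset {p : G.Walk u v} {u' v' : V} {q : G.Walk u' v'} (hp : p.Within A)
    (h : q.support ⊆ p.support) : q.Within A := fun x hx => hp x (h hx)

theorem two_le_length_of_not_adj (p : G.Walk u v) (huv : u ≠ v) (hadj : ¬ G.Adj u v) :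
    2 ≤ p.length := by
  rcases p with _ | ⟨h, _ | _⟩
  · exact absurd rfl huv
  · exact absurd h hadj
  · simp

theorem isChordless_cons_cons_nil {a b c : V} (hab : G.Adj a b) (hbc : G.Adj b c)
    (hac : ¬ G.Adj a c) : (cons hab (cons hbc nil)).IsChordless := by
  rw [isChordless_iff_forall_mem_edges]
  intro x y hx hy hxy
  simp only [support_cons, support_nil, List.mem_cons, List.not_mem_nil, or_false] at hx hy
  rcases hx with rfl | rfl | rfl <;> rcases hy with rfl | rfl | rfl <;>
    first
      | exact absurd hxy (G.loopless.irrefl _)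
      | exact absurd hxy hac
      | exact absurd hxy.symm hac
      | simp

theorem exists_shorter_of_adj_of_notMem_edges (p : G.Walk u v) {x y : V} (hx : x ∈ p.support)
    (hy : y ∈ p.support) (hxy : G.Adj x y) (he : s(x, y) ∉ p.edges) :
    ∃ q : G.Walk u v, q.length < p.length ∧ q.support ⊆ p.support := by
  induction p with
  | nil =>
    simp only [support_nil, List.mem_singleton] at hx hy
    exact absurd (hx.trans hy.symm) hxy.ne
  | @cons a d b h r ih =>
    classical
    have head : ∀ {y}, y ∈ (cons h r).support → G.Adj a y → s(a, y) ∉ (cons h r).edges →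
        ∃ q : G.Walk a b, q.length < (cons h r).length ∧ q.support ⊆ (cons h r).support := by
      intro y hy hay he
      have hyr : y ∈ r.support := (List.mem_cons.1 hy).resolve_left hay.ne.symm
      have hyd : y ≠ d := by rintro rfl; simp at he
      refine ⟨cons hay (r.dropUntil y hyr), ?_, ?_⟩
      · simpa using r.length_dropUntil_lt_length hyr hyd
      · simpa using List.Subset.trans (r.support_dropUntil_subset_support hyr)
          (List.subset_cons_self a _)
    rcases List.mem_cons.1 hx with rfl | hxr
    · exact head hy hxy he
    rcases List.mem_cons.1 hy with rfl | hyr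
    · exact head hx hxy.symm (by rwa [Sym2.eq_swap])
    obtain ⟨q, hlen, hsub⟩ := ih hxr hyr (fun h' => he (by simp [h']))
    exact ⟨cons h q, by simpa, List.cons_subset_cons _ hsub⟩

end Walk

def ReachableIn (G : SimpleGraph V) (A : Finset V) (u v : V) : Prop :=
  ∃ p : G.Walk u v, p.Within A

def PreconnectedIn (G : SimpleGraph V) (A : Finset V) : Prop :=
  ∀ a ∈ A, ∀ b ∈ A, G.ReachableIn A a b

namespace ReachableIn

theorem refl (hu : u ∈ A) : G.ReachableIn A u u :=
  ⟨.nil, fun x hx => by rwa [List.mem_singleton.1 hx]⟩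

theorem symm (h : G.ReachableIn A u v) : G.ReachableIn A v u :=
  let ⟨p, hp⟩ := h; ⟨p.reverse, hp.reverse⟩

theorem trans (h : G.ReachableIn A u v) (h' : G.ReachableIn A v w) : G.ReachableIn A u w :=
  let ⟨p, hp⟩ := h; let ⟨q, hq⟩ := h'; ⟨p.append q, hp.append hq⟩

theorem mono (h : G.ReachableIn A u v) (hAB : A ⊆ B) : G.ReachableIn B u v :=
  let ⟨p, hp⟩ := h; ⟨p, hp.mono hAB⟩

theorem end_mem (h : G.ReachableIn A u v) : v ∈ A := let ⟨_, hp⟩ := h; hp.end_mem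

end ReachableIn

theorem Adj.reachableIn (h : G.Adj u v) (hu : u ∈ A) (hv : v ∈ A) :
    G.ReachableIn A u v :=
  ⟨h.toWalk, fun x hx => by simp only [Adj.support_toWalk, List.mem_cons,
    List.not_mem_nil, or_false] at hx; rcases hx with rfl | rfl <;> assumption⟩

theorem Connected.preconnectedIn_univ [Fintype V] (h : G.Connected) : G.PreconnectedIn univ :=
  fun a _ b _ => let ⟨p⟩ := h.preconnected a b; ⟨p, fun x _ => mem_univ x⟩

open Classical in
noncomputable def componentIn (G : SimpleGraph V) (B : Finset V) (u : V) : Finset V :=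
  B.filter (G.ReachableIn B u)

theorem mem_componentIn : w ∈ G.componentIn B u ↔ G.ReachableIn B u w := by
  classical
  simpa [componentIn] using fun h => h.end_mem

theorem componentIn_subset : G.componentIn B u ⊆ B := fun _ h => (mem_componentIn.1 h).end_mem

theorem mem_componentIn_self (hu : u ∈ B) : u ∈ G.componentIn B u :=
  mem_componentIn.2 (.refl hu)

theorem mem_componentIn_of_adj (hw : w ∈ G.componentIn B u) (h : G.Adj w v) (hv : v ∈ B) :
    v ∈ G.componentIn B u :=
  mem_componentIn.2 ((mem_componentIn.1 hw).trans (h.reachableIn (componentIn_subset hw) hv))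

def SimplicialIn (G : SimpleGraph V) (A : Finset V) (x : V) : Prop :=
  x ∈ A ∧ G.IsClique {a | a ∈ A ∧ G.Adj x a}

theorem SimplicialIn.mono (hx : G.SimplicialIn A x) (hBA : B ⊆ A) (hxB : x ∈ B) :
    G.SimplicialIn B x :=
  ⟨hxB, hx.2.subset (Set.ofPred_subset_ofPred.2 fun _ ha => ⟨hBA ha.1, ha.2⟩)⟩

def IsCliqueIn (G : SimpleGraph V) (A Q : Finset V) : Prop := Q ⊆ A ∧ G.IsClique (Q : Set V)

theorem IsCliqueIn.exists_le_maximal (hQ : G.IsCliqueIn A Q) :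
    ∃ R, Q ⊆ R ∧ Maximal (G.IsCliqueIn A) R :=
  Set.Finite.exists_le_maximal (s := {R | G.IsCliqueIn A R})
    (A.powerset.finite_toSet.subset fun _ hR => mem_powerset.2 hR.1) hQ

variable [DecidableEq V]

theorem PreconnectedIn.reachableIn_insert_insert (hA : G.PreconnectedIn A)
    {a b c c' : V} (hc : c ∈ A) (hc' : c' ∈ A) (hac : G.Adj a c) (hbc' : G.Adj b c') :
    G.ReachableIn (insert a (insert b A)) a b := by
  have hsub : A ⊆ insert a (insert b A) := (subset_insert b A).trans (subset_insert a _)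
  exact ((hac.reachableIn (mem_insert_self a _) (hsub hc)).trans
    ((hA c hc c' hc').mono hsub)).trans
    (hbc'.symm.reachableIn (hsub hc') (mem_insert_of_mem (mem_insert_self b A)))

theorem Walk.Within.componentIn {p : G.Walk u v} (hp : p.Within B) :
    p.Within (G.componentIn B u) :=
  fun x hx => mem_componentIn.2 ⟨p.takeUntil x hx, hp.takeUntil hx⟩

theorem preconnectedIn_componentIn : G.PreconnectedIn (G.componentIn B u) := by
  intro c hc c' hc'
  obtain ⟨p, hp⟩ := mem_componentIn.1 hc
  obtain ⟨q, hq⟩ := mem_componentIn.1 hc'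
  exact ⟨p.reverse.append q, hp.componentIn.reverse.append hq.componentIn⟩

theorem Walk.exists_adj_of_within_insert (p : G.Walk u z) (hp : p.Within (insert z B))
    (huz : u ≠ z) : ∃ c ∈ G.componentIn B u, G.Adj c z := by
  induction p with
  | nil => exact absurd rfl huz
  | @cons u m z h r ih =>
    have huB : u ∈ B := (mem_insert.1 (hp u (by simp))).resolve_left huz
    by_cases hmz : m = z
    · subst hmz
      exact ⟨u, mem_componentIn_self huB, h⟩
    have hmB : m ∈ B := (mem_insert.1 (hp m (by simp))).resolve_left hmz
    obtain ⟨c, hc, hcz⟩ := ih (fun x hx => hp x (by simp [hx])) hmz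
    exact ⟨c, mem_componentIn.2 ((h.reachableIn huB hmB).trans (mem_componentIn.1 hc)), hcz⟩

theorem ReachableIn.exists_isPath_isChordless (h : G.ReachableIn A u v) :
    ∃ p : G.Walk u v, p.IsPath ∧ p.IsChordless ∧ p.Within A := by
  obtain ⟨p, hp, hmin⟩ := exists_minimalFor_of_wellFoundedLT (fun p : G.Walk u v => p.Within A)
    Walk.length h
  have hbp : p.bypass.Within A := hp.of_support_subset p.support_bypass_subset_support
  refine ⟨p.bypass, p.bypass_isPath, Walk.isChordless_iff_forall_mem_edges.2 ?_, hbp⟩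
  intro x y hx hy hxy
  by_contra he
  obtain ⟨q, hlen, hsub⟩ := p.bypass.exists_shorter_of_adj_of_notMem_edges hx hy hxy he
  have := hmin (hbp.of_support_subset hsub) (hlen.le.trans p.length_bypass_le_length)
  have := p.length_bypass_le_length
  omega

def SeparatesIn (G : SimpleGraph V) (A : Finset V) (u v : V) (S : Finset V) : Prop :=
  u ∈ A \ S ∧ v ∈ A \ S ∧ ¬ G.ReachableIn (A \ S) u v

theorem separatesIn_comm : G.SeparatesIn A u v = G.SeparatesIn A v u := by
  ext S
  exact ⟨fun ⟨hu, hv, h⟩ => ⟨hv, hu, fun h' => h h'.symm⟩,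
    fun ⟨hv, hu, h⟩ => ⟨hu, hv, fun h' => h h'.symm⟩⟩

namespace SeparatesIn

theorem ne (h : G.SeparatesIn A u v S) : u ≠ v := by
  rintro rfl
  exact h.2.2 (.refl h.1)

theorem not_adj (h : G.SeparatesIn A u v S) : ¬ G.Adj u v :=
  fun huv => h.2.2 (huv.reachableIn h.1 h.2.1)

theorem notMem_componentIn (h : G.SeparatesIn A u v S) : v ∉ G.componentIn (A \ S) u :=
  fun hv => h.2.2 (mem_componentIn.1 hv)

theorem not_adj_of_mem_componentIn (h : G.SeparatesIn A u v S) {c d : V}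
    (hc : c ∈ G.componentIn (A \ S) u) (hd : d ∈ G.componentIn (A \ S) v) : ¬ G.Adj c d :=
  fun hcd => h.notMem_componentIn <| mem_componentIn.2 <|
    ((mem_componentIn.1 (mem_componentIn_of_adj hc hcd (componentIn_subset hd))).trans
      (mem_componentIn.1 hd).symm)

theorem disjoint_componentIn (h : G.SeparatesIn A u v S) :
    Disjoint (G.componentIn (A \ S) u) (G.componentIn (A \ S) v) :=
  Finset.disjoint_left.2 fun _ hc hc' => h.notMem_componentIn <|
    mem_componentIn.2 ((mem_componentIn.1 hc).trans (mem_componentIn.1 hc').symm)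

end SeparatesIn

theorem SeparatesIn.of_subset (h : G.SeparatesIn A u v T) (hBA : B ⊆ A) (hu : u ∈ B)
    (hv : v ∈ B) : G.SeparatesIn B u v T :=
  ⟨mem_sdiff.2 ⟨hu, (mem_sdiff.1 h.1).2⟩, mem_sdiff.2 ⟨hv, (mem_sdiff.1 h.2.1).2⟩,
    fun h' => h.2.2 (h'.mono (sdiff_subset_sdiff hBA le_rfl))⟩

theorem exists_minimal_separatesIn (hu : u ∈ A) (hv : v ∈ A) (huv : u ≠ v)
    (hadj : ¬ G.Adj u v) :
    ∃ S ⊆ A, Minimal (G.SeparatesIn A u v) S := by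
  have hsep : G.SeparatesIn A u v (A \ {u, v}) := by
    refine ⟨by simp [hu], by simp [hv], fun ⟨p, hp⟩ => ?_⟩
    obtain ⟨m, hum, r, rfl⟩ := Walk.exists_eq_cons_of_ne huv p
    have : m ∈ A ∧ (m = u ∨ m = v) := by simpa using hp m (by simp)
    rcases this.2 with rfl | rfl
    exacts [hum.ne rfl, hadj hum]
  obtain ⟨S, hS, hmin⟩ := exists_minimal_le_of_wellFoundedLT _ _ hsep
  exact ⟨S, hS.trans sdiff_subset, hmin⟩

theorem exists_mem_componentIn_adj_of_minimal (hS : Minimal (G.SeparatesIn A u v) S)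
    (hz : z ∈ S) : ∃ c ∈ G.componentIn (A \ S) u, G.Adj c z := by
  obtain ⟨hu, hv, hsep⟩ := hS.prop
  have hnot : ¬ G.SeparatesIn A u v (S.erase z) := hS.not_prop_of_lt (erase_ssubset hz)
  have hsub : A \ S ⊆ A \ S.erase z := sdiff_subset_sdiff subset_rfl (erase_subset z S)
  obtain ⟨p, hp⟩ : G.ReachableIn (A \ S.erase z) u v := by
    by_contra h
    exact hnot ⟨hsub hu, hsub hv, h⟩
  have hzp : z ∈ p.support := by
    by_contra hzp
    exact hsep ⟨p, fun x hx => by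
      have := hp x hx
      simp only [mem_sdiff, mem_erase] at this ⊢
      exact ⟨this.1, fun hxS => this.2 ⟨fun h => hzp (h ▸ hx), hxS⟩⟩⟩
  refine (p.takeUntil z hzp).exists_adj_of_within_insert (fun x hx => ?_)
    fun h => (mem_sdiff.1 hu).2 (h ▸ hz)
  have := hp.takeUntil hzp x hx
  simp only [mem_sdiff, mem_erase, mem_insert] at this ⊢
  tauto

theorem SimplicialIn.reachableIn_erase (hx : G.SimplicialIn A x) (h : G.ReachableIn A u v)
    (hu : u ≠ x) (hv : v ≠ x) : G.ReachableIn (A.erase x) u v := by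
  obtain ⟨p, hp⟩ := h
  induction hn : p.length using Nat.strong_induction_on generalizing u p with
  | _ n ih =>
  have huA : u ∈ A.erase x := mem_erase.2 ⟨hu, hp.start_mem⟩
  cases p with
  | nil => exact .refl huA
  | @cons _ m _ h r =>
    by_cases hmx : m = x
    swap
    · exact (h.reachableIn huA (mem_erase.2 ⟨hmx, hp m (by simp)⟩)).trans
        (ih _ (by simp [← hn]) hmx r (hp.of_support_subset (by simp)) rfl)
    -- the walk passes `u - x - m'`; since `x` is simplicial, `u - m'` is an edge (or `m' = u`)
    subst hmx
    cases r with
    | nil => exact absurd rfl hv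
    | @cons _ m' _ h' r' =>
      have hr' : r'.Within A := hp.of_support_subset (by simp)
      by_cases hm' : m' = u
      · subst hm'
        exact ih _ (by simp [← hn]) hu r' hr' rfl
      have hum' : G.Adj u m' :=
        hx.2 ⟨hp.start_mem, h.symm⟩ ⟨hr'.start_mem, h'⟩ (Ne.symm hm')
      refine ih _ (by simp [← hn]) hu (.cons hum' r') (fun z hz => ?_) rfl
      rcases List.mem_cons.1 hz with rfl | hz
      exacts [hp.start_mem, hr' z hz]

theorem SimplicialIn.preconnectedIn_erase (hx : G.SimplicialIn A x) (hA : G.PreconnectedIn A) :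
    G.PreconnectedIn (A.erase x) := fun a ha b hb =>
  hx.reachableIn_erase (hA a (mem_of_mem_erase ha) b (mem_of_mem_erase hb)) (ne_of_mem_erase ha)
    (ne_of_mem_erase hb)

theorem SimplicialIn.separatesIn_of_erase (hx : G.SimplicialIn A x)
    (h : G.SeparatesIn (A.erase x) u v T) : G.SeparatesIn A u v T := by
  obtain ⟨hu, hv, hsep⟩ := h
  rw [erase_sdiff_comm] at hu hv hsep
  refine ⟨mem_of_mem_erase hu, mem_of_mem_erase hv, fun h => hsep ?_⟩
  by_cases hxT : x ∈ T
  · exact h.mono fun z hz => mem_erase.2 ⟨fun hzx => (mem_sdiff.1 hz).2 (hzx ▸ hxT), hz⟩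
  · exact (hx.mono sdiff_subset (mem_sdiff.2 ⟨hx.1, hxT⟩)).reachableIn_erase h
      (ne_of_mem_erase hu) (ne_of_mem_erase hv)

theorem SimplicialIn.minimal_separatesIn_of_erase (hx : G.SimplicialIn A x)
    (hT : Minimal (G.SeparatesIn (A.erase x) u v) T) : Minimal (G.SeparatesIn A u v) T := by
  refine ⟨hx.separatesIn_of_erase hT.prop, fun T' hT' hle => hT.le_of_le ?_ hle⟩
  obtain ⟨hu, hv, -⟩ := hT.prop
  exact hT'.of_subset (erase_subset x A) (mem_sdiff.1 hu).1 (mem_sdiff.1 hv).1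

theorem SimplicialIn.of_union_componentIn {c : V} (hSA : S ⊆ A)
    (hc : c ∈ G.componentIn (A \ S) w) (h : G.SimplicialIn (G.componentIn (A \ S) w ∪ S) c) :
    G.SimplicialIn A c := by
  have hclose : ∀ z ∈ A, G.Adj c z → z ∈ G.componentIn (A \ S) w ∪ S := fun z hz hcz => by
    by_cases hzS : z ∈ S
    · exact mem_union_right _ hzS
    · exact mem_union_left _ (mem_componentIn_of_adj hc hcz (mem_sdiff.2 ⟨hz, hzS⟩))
  exact ⟨union_subset (componentIn_subset.trans sdiff_subset) hSA h.1, fun a ha b hb hab =>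
    h.2 ⟨hclose a ha.1 ha.2, ha.2⟩ ⟨hclose b hb.1 hb.2, hb.2⟩ hab⟩

namespace SimplicialIn

variable [DecidableRel G.Adj] {Q R : Finset V} {k : ℕ}

theorem isCliqueIn_insert (hx : G.SimplicialIn A x) :
    G.IsCliqueIn A (insert x {a ∈ A | G.Adj x a}) :=
  ⟨insert_subset hx.1 (filter_subset _ _), by
    rw [coe_insert, coe_filter]; exact hx.2.insert fun a ha _ => ha.2⟩

theorem eq_insert_of_maximal (hx : G.SimplicialIn A x) (hR : Maximal (G.IsCliqueIn A) R)
    (hxR : x ∈ R) : R = insert x {a ∈ A | G.Adj x a} := by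
  refine hR.eq_of_le hx.isCliqueIn_insert fun a ha => ?_
  by_cases hax : a = x
  · exact hax ▸ mem_insert_self _ _
  · exact mem_insert_of_mem (mem_filter.2 ⟨hR.prop.1 ha, hR.prop.2 hxR ha (Ne.symm hax)⟩)

theorem card_filter_adj (hx : G.SimplicialIn A x)
    (hcl : ∀ Q, Maximal (G.IsCliqueIn A) Q → #Q = k + 1) : #{a ∈ A | G.Adj x a} = k := by
  obtain ⟨R, hsub, hR⟩ := hx.isCliqueIn_insert.exists_le_maximal
  have := hcl R hR
  rw [hx.eq_insert_of_maximal hR (hsub (mem_insert_self _ _)),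
    card_insert_of_notMem (by simp)] at this
  omega

-- The only maximal clique of `A` through `x` is `x` with its neighbourhood `N`; so a maximal
-- clique of `A.erase x` that is not maximal in `A` lies in `N`, and `w` would enlarge it.
theorem maximal_of_erase (hx : G.SimplicialIn A x) (hw : w ∈ A.erase x)
    (hwN : w ∉ ({a ∈ A | G.Adj x a} : Finset V))
    (hwadj : ∀ s ∈ {a ∈ A | G.Adj x a}, G.Adj w s)
    (hQ : Maximal (G.IsCliqueIn (A.erase x)) Q) : Maximal (G.IsCliqueIn A) Q := by
  obtain ⟨R, hQR, hR⟩ := IsCliqueIn.exists_le_maximal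
    (⟨hQ.prop.1.trans (erase_subset x A), hQ.prop.2⟩ : G.IsCliqueIn A Q)
  by_cases hxR : x ∈ R
  · have hQN : Q ⊆ {a ∈ A | G.Adj x a} := fun q hq => by
      have := hQR hq
      rw [hx.eq_insert_of_maximal hR hxR, mem_insert] at this
      exact this.resolve_left (ne_of_mem_erase (hQ.prop.1 hq))
    have hins : G.IsCliqueIn (A.erase x) (insert w Q) := ⟨insert_subset hw hQ.prop.1, by
      rw [coe_insert]; exact hQ.prop.2.insert fun q hq _ => hwadj q (hQN hq)⟩
    exact absurd (hQ.eq_of_le hins (subset_insert w Q) ▸ mem_insert_self w Q) fun h => hwN (hQN h)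
  · have hR' : G.IsCliqueIn (A.erase x) R :=
      ⟨fun a ha => mem_erase.2 ⟨fun h => hxR (h ▸ ha), hR.prop.1 ha⟩, hR.prop.2⟩
    rwa [hQ.eq_of_le hR' hQR]

end SimplicialIn

end SimpleGraph

namespace Paper

open SimpleGraph Walk

variable {V : Type} {G : SimpleGraph V} {k : ℕ} {A S : Finset V} {r : V → ℕ} {u v x y : V}

-- The cycle `p ++ q` has length at least 4, so a chord exists; chordlessness of `p` and `q`
-- forces it to join their interiors.
theorem IsChordal.exists_adj_of_isChordless (hG : IsChordal G) {a b : V} (hab : a ≠ b)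
    (hnadj : ¬ G.Adj a b) {p : G.Walk a b} {q : G.Walk b a} (hp : p.IsPath) (hq : q.IsPath)
    (hpc : p.IsChordless) (hqc : q.IsChordless)
    (hpq : ∀ x ∈ p.support, x ∈ q.support → x = a ∨ x = b) :
    ∃ x ∈ p.support, x ∉ q.support ∧
      ∃ y ∈ q.support, y ∉ p.support ∧ G.Adj x y := by
  have hstart : ∀ {c d : V} {r : G.Walk c d}, r.IsPath → c ∉ r.support.tail := fun hr =>
    (List.nodup_cons.1 (by rw [cons_tail_support]; exact hr.support_nodup)).1
  have hdisj : p.support.tail.Disjoint q.support.tail := by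
    refine List.disjoint_left.2 fun x hxp hxq => ?_
    rcases hpq x (List.mem_of_mem_tail hxp) (List.mem_of_mem_tail hxq) with rfl | rfl
    exacts [hstart hp hxp, hstart hq hxq]
  have hlen := p.two_le_length_of_not_adj hab hnadj
  have hcyc : (p.append q).IsCycle := hp.isCycle_append hq hdisj (Or.inl (by omega))
  obtain ⟨x, y, hx, hy, hxy, he⟩ := hG a (p.append q) hcyc
    (by have := q.two_le_length_of_not_adj hab.symm (fun h => hnadj h.symm)
        rw [length_append]; omega)
  rw [edges_append, List.mem_append, not_or] at he
  have hp' : x ∈ p.support → y ∈ p.support → False :=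
    fun hx hy => he.1 (hpc.mem_edges hx hy hxy)
  have hq' : x ∈ q.support → y ∈ q.support → False :=
    fun hx hy => he.2 (hqc.mem_edges hx hy hxy)
  rcases (mem_support_append_iff p q).1 hx with hxp | hxq <;>
    rcases (mem_support_append_iff p q).1 hy with hyp | hyq
  · exact (hp' hxp hyp).elim
  · exact ⟨x, hxp, fun hxq => hq' hxq hyq, y, hyq, fun hyp => hp' hxp hyp, hxy⟩
  · exact ⟨y, hyp, fun hyq => hq' hxq hyq, x, hxq, fun hxp => hp' hxp hyp, hxy.symm⟩
  · exact (hq' hxq hyq).elim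

-- `r` plays the role of `σ.symm` in `IsKTree`, for a `k`-tree on the vertex set `A`.
structure IsKTreeRank (G : SimpleGraph V) (k : ℕ) (A : Finset V) (r : V → ℕ) : Prop where
  injOn : Set.InjOn r A
  lt_card : ∀ a ∈ A, r a < #A
  card_base : #{a ∈ A | r a < k + 1} = k + 1
  adj_of_lt : ∀ a ∈ A, ∀ b ∈ A, r a < r b → r b < k + 1 → G.Adj a b
  exists_isNClique : ∀ b ∈ A, k + 1 ≤ r b →
    ∃ s, G.IsNClique k s ∧ ∀ a, a ∈ s ↔ a ∈ A ∧ r a < r b ∧ G.Adj b a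

theorem IsKTree.exists_isKTreeRank [Fintype V] (h : IsKTree k G) :
    ∃ r, IsKTreeRank G k univ r := by
  obtain ⟨n, σ, hn, hbase, hstep⟩ := h
  refine ⟨fun v => σ.symm v, ⟨fun a _ b _ h => σ.symm.injective (Fin.ext h), fun a _ => ?_,
    ?_, fun a _ b _ hab hb => ?_, fun b _ hb => ?_⟩⟩
  · have hcard : Fintype.card V = n := by simpa using (Fintype.card_congr σ).symm
    rw [card_univ, hcard]
    exact (σ.symm a).2
  · rw [card_equiv σ.symm (t := {i : Fin n | i < k + 1}) (by simp), Fin.card_filter_val_lt]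
    omega
  · simpa using hbase (σ.symm a) (σ.symm b) hab hb
  · obtain ⟨s, hs, hmem⟩ := hstep (σ.symm b) hb
    refine ⟨s, hs, fun a => ?_⟩
    rw [hmem]
    exact ⟨fun ⟨i, hi, hai, h⟩ => by subst hai; simpa [hi] using h,
      fun ⟨_, hlt, h⟩ => ⟨σ.symm a, hlt, by simp, by simpa using h⟩⟩

theorem IsKTreeRank.isKTree [Fintype V] (hr : IsKTreeRank G k univ r) : IsKTree k G := by
  set n := Fintype.card V
  let e : V → Fin n := fun v => ⟨r v, by simpa using hr.lt_card v (mem_univ v)⟩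
  have he : e.Bijective := (Fintype.bijective_iff_injective_and_card e).2
    ⟨fun a b h => hr.injOn (mem_univ a) (mem_univ b) (Fin.ext_iff.1 h), by simp [n]⟩
  set σ := (Equiv.ofBijective e he).symm
  have hrσ : ∀ i, r (σ i) = i := fun i =>
    congrArg Fin.val ((Equiv.ofBijective e he).apply_symm_apply i)
  have hσr : ∀ v, σ ⟨r v, _⟩ = v := fun v => (Equiv.ofBijective e he).symm_apply_apply v
  refine ⟨n, σ, hr.card_base ▸ card_le_univ _, fun i j hij hj => ?_, fun j hj => ?_⟩
  · exact hr.adj_of_lt _ (mem_univ _) _ (mem_univ _) (by rwa [hrσ, hrσ]) (by rwa [hrσ])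
  · obtain ⟨s, hs, hmem⟩ := hr.exists_isNClique (σ j) (mem_univ _) (by rwa [hrσ])
    refine ⟨s, hs, fun a => ?_⟩
    rw [hmem, hrσ]
    exact ⟨fun ⟨_, hlt, h⟩ => ⟨e a, hlt, (hσr a).symm, h⟩,
      fun ⟨i, hi, hai, h⟩ => ⟨mem_univ _, by simpa [hai, hrσ] using hi, h⟩⟩

theorem isKTree_iff_exists_isKTreeRank [Fintype V] :
    IsKTree k G ↔ ∃ r, IsKTreeRank G k univ r :=
  ⟨IsKTree.exists_isKTreeRank, fun ⟨_, hr⟩ => hr.isKTree⟩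

theorem IsKTreeRank.isNClique_base (hr : IsKTreeRank G k A r) :
    G.IsNClique (k + 1) {a ∈ A | r a < k + 1} := by
  refine ⟨fun a ha b hb hab => ?_, hr.card_base⟩
  simp only [coe_filter, Set.mem_ofPred_eq] at ha hb
  rcases lt_trichotomy (r a) (r b) with h | h | h
  · exact hr.adj_of_lt a ha.1 b hb.1 h hb.2
  · exact absurd (hr.injOn ha.1 hb.1 h) hab
  · exact (hr.adj_of_lt b hb.1 a ha.1 h ha.2).symm

theorem isMaxClique_iff_maximal [Fintype V] {Q : Finset V} :
    IsMaxClique G Q ↔ Maximal (G.IsCliqueIn univ) Q :=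
  ⟨fun h => ⟨⟨subset_univ Q, h.1⟩, fun R hR hQR => (h.2 R hR.2 hQR).ge⟩,
    fun h => ⟨h.prop.2, fun R hR hQR => h.eq_of_le ⟨subset_univ R, hR⟩ hQR⟩⟩

variable [DecidableEq V]

theorem separatesIn_univ_iff [Fintype V] : G.SeparatesIn univ u v S ↔ IsUVSeparator G u v S := by
  refine ⟨fun h => ⟨h.ne, h.not_adj, (mem_sdiff.1 h.1).2, (mem_sdiff.1 h.2.1).2, fun p => ?_⟩,
    fun h => ⟨by simp [h.2.2.1], by simp [h.2.2.2.1], fun ⟨p, hp⟩ => ?_⟩⟩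
  · by_contra! hp
    exact h.2.2 ⟨p, fun x hx => mem_sdiff.2 ⟨mem_univ x, hp x hx⟩⟩
  · obtain ⟨x, hx, hxS⟩ := h.2.2.2.2 p
    exact (mem_sdiff.1 (hp x hx)).2 hxS

theorem isMinSep_iff [Fintype V] :
    IsMinSep G S ↔ ∃ u v, Minimal (G.SeparatesIn univ u v) S := by
  refine exists₂_congr fun u v => ?_
  rw [minimal_iff, separatesIn_univ_iff]
  exact and_congr_right' ⟨fun h T hT hTS => (h T hTS (separatesIn_univ_iff.1 hT)).symm,
    fun h T hTS hT => (h (separatesIn_univ_iff.2 hT) hTS).symm⟩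

theorem exists_isChordless_through_componentIn (hS : Minimal (G.SeparatesIn A u v) S)
    {a b : V} (ha : a ∈ S) (hb : b ∈ S) : ∃ p : G.Walk a b, p.IsPath ∧ p.IsChordless ∧
      p.Within (insert a (insert b (G.componentIn (A \ S) u))) := by
  obtain ⟨c, hc, hca⟩ := exists_mem_componentIn_adj_of_minimal hS ha
  obtain ⟨c', hc', hcb⟩ := exists_mem_componentIn_adj_of_minimal hS hb
  exact (preconnectedIn_componentIn.reachableIn_insert_insert hc hc' hca.symm hcb.symm)
    |>.exists_isPath_isChordless

-- Chordless `a`-`b` paths through the components of `u` and of `v` close up to a cycle whose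
-- chord would have to join the two components.
theorem IsChordal.isClique_of_minimal_separatesIn (hG : IsChordal G)
    (hS : Minimal (G.SeparatesIn A u v) S) : G.IsClique (S : Set V) := by
  intro a ha b hb hab
  by_contra hnadj
  have hsep := hS.prop
  set Cu := G.componentIn (A \ S) u
  set Cv := G.componentIn (A \ S) v
  obtain ⟨p, hp, hpc, hpw⟩ := exists_isChordless_through_componentIn hS ha hb
  obtain ⟨q, hq, hqc, hqw⟩ :=
    exists_isChordless_through_componentIn (separatesIn_comm (A := A) ▸ hS) hb ha
  have hdisj := Finset.disjoint_left.1 hsep.disjoint_componentIn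
  have hpq : ∀ x ∈ p.support, x ∈ q.support → x = a ∨ x = b := by
    intro x hxp hxq
    have h1 := hpw x hxp
    have h2 := hqw x hxq
    simp only [mem_insert] at h1 h2
    by_contra h
    exact hdisj (by tauto) (by tauto : x ∈ Cv)
  obtain ⟨x, hxp, hxq, y, hyq, hyp, hxy⟩ :=
    hG.exists_adj_of_isChordless hab hnadj hp hq hpc hqc hpq
  have hxCu : x ∈ Cu := by
    have := hpw x hxp
    simp only [mem_insert] at this
    rcases this with rfl | rfl | h
    exacts [absurd q.end_mem_support hxq, absurd q.start_mem_support hxq, h]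
  have hyCv : y ∈ Cv := by
    have := hqw y hyq
    simp only [mem_insert] at this
    rcases this with rfl | rfl | h
    exacts [absurd p.end_mem_support hyp, absurd p.start_mem_support hyp, h]
  exact hsep.not_adj_of_mem_componentIn hxCu hyCv hxy

-- Dirac's lemma, in the strengthened form needed for the induction.
theorem IsChordal.exists_simplicialIn_pair (hG : IsChordal G) (hA : ¬ G.IsClique (A : Set V)) :
    ∃ x y, x ≠ y ∧ ¬ G.Adj x y ∧ G.SimplicialIn A x ∧ G.SimplicialIn A y := by
  induction A using Finset.strongInduction with
  | H A ih =>
  obtain ⟨u, hu, v, hv, huv, hadj⟩ : ∃ u ∈ A, ∃ v ∈ A, u ≠ v ∧ ¬ G.Adj u v := by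
    simpa [IsClique, Set.Pairwise] using hA
  obtain ⟨S, hSA, hS⟩ := exists_minimal_separatesIn hu hv huv hadj
  have hScl := hG.isClique_of_minimal_separatesIn hS
  have side : ∀ {w w'}, Minimal (G.SeparatesIn A w w') S →
      ∃ c ∈ G.componentIn (A \ S) w, G.SimplicialIn A c := by
    intro w w' hS
    obtain ⟨hw, hw', -⟩ := hS.prop
    set C := G.componentIn (A \ S) w
    have hCA : C ⊆ A := componentIn_subset.trans sdiff_subset
    have hlt : C ∪ S ⊂ A := by
      refine ssubset_of_subset_of_ne (union_subset hCA hSA) fun h => ?_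
      have : w' ∈ C ∪ S := h ▸ (mem_sdiff.1 hw').1
      rcases mem_union.1 this with h' | h'
      exacts [hS.prop.notMem_componentIn h', (mem_sdiff.1 hw').2 h']
    have lift : ∀ c ∈ C, G.SimplicialIn (C ∪ S) c → G.SimplicialIn A c :=
      fun c hc => SimplicialIn.of_union_componentIn hSA hc
    by_cases hcl : G.IsClique ((C ∪ S : Finset V) : Set V)
    · have hwC : w ∈ C := mem_componentIn_self hw
      exact ⟨w, hwC, lift w hwC ⟨mem_union_left _ hwC, hcl.subset fun a ha => ha.1⟩⟩
    obtain ⟨x, y, hxy, hnxy, hx, hy⟩ := ih _ hlt hcl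
    have : x ∈ C ∨ y ∈ C := by
      by_contra! h
      have hxS := (mem_union.1 hx.1).resolve_left h.1
      have hyS := (mem_union.1 hy.1).resolve_left h.2
      exact hnxy (hScl hxS hyS hxy)
    rcases this with h | h
    exacts [⟨x, h, lift x h hx⟩, ⟨y, h, lift y h hy⟩]
  obtain ⟨x, hx, hxs⟩ := side hS
  obtain ⟨y, hy, hys⟩ := side (separatesIn_comm (A := A) ▸ hS)
  exact ⟨x, y, fun h => Finset.disjoint_left.1 hS.prop.disjoint_componentIn hx (h ▸ hy),
    hS.prop.not_adj_of_mem_componentIn hx hy, hxs, hys⟩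

theorem IsChordal.exists_simplicialIn (hG : IsChordal G) (hA : A.Nonempty) :
    ∃ x, G.SimplicialIn A x := by
  by_cases hcl : G.IsClique (A : Set V)
  · obtain ⟨x, hx⟩ := hA
    exact ⟨x, hx, hcl.subset fun a ha => ha.1⟩
  · obtain ⟨x, -, -, -, hx, -⟩ := hG.exists_simplicialIn_pair hcl
    exact ⟨x, hx⟩

-- Otherwise a chordless path from `s` to `c₀` through `C`, closed up by `c₀ - s₀ - s`, would be
-- a chordless cycle.
theorem IsChordal.adj_of_forall_not_adj_erase (hG : IsChordal G) {C : Finset V}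
    (hC : G.PreconnectedIn C) {c₀ d s s₀ : V} (hc₀ : c₀ ∈ C) (hd : d ∈ C) (hsC : s ∉ C)
    (hs₀C : s₀ ∉ C) (hsd : G.Adj s d) (hs₀s : G.Adj s₀ s) (hs₀c₀ : G.Adj s₀ c₀)
    (hs₀ : ∀ c ∈ C.erase c₀, ¬ G.Adj s₀ c) : G.Adj c₀ s := by
  by_contra hc₀s
  have hss₀ : s ≠ s₀ := hs₀s.ne.symm
  obtain ⟨p, hp, hpc, hpw⟩ :
      ∃ p : G.Walk s c₀, p.IsPath ∧ p.IsChordless ∧ p.Within (insert s C) :=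
    ReachableIn.exists_isPath_isChordless <| (hsd.reachableIn (mem_insert_self s C)
      (mem_insert_of_mem hd)).trans ((hC d hd c₀ hc₀).mono (subset_insert s C))
  let q : G.Walk c₀ s := .cons hs₀c₀.symm (.cons hs₀s .nil)
  have hqsupp : ∀ x, x ∈ q.support ↔ x = c₀ ∨ x = s₀ ∨ x = s := by simp [q]
  have hq : q.IsPath := by
    simp [q, ne_of_mem_of_not_mem hc₀ hs₀C, ne_of_mem_of_not_mem hc₀ hsC, hss₀.symm]
  have hpq : ∀ x ∈ p.support, x ∈ q.support → x = s ∨ x = c₀ := by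
    intro x hxp hxq
    rcases (hqsupp x).1 hxq with rfl | rfl | rfl
    · exact Or.inr rfl
    · exact absurd ((mem_insert.1 (hpw x hxp)).resolve_left hss₀.symm) hs₀C
    · exact Or.inl rfl
  obtain ⟨x, hxp, hxq, y, hyq, hyp, hxy⟩ := hG.exists_adj_of_isChordless
    (ne_of_mem_of_not_mem hc₀ hsC).symm (fun h => hc₀s h.symm) hp hq hpc
    (isChordless_cons_cons_nil _ _ hc₀s) hpq
  have hy : y = s₀ := by
    rcases (hqsupp y).1 hyq with rfl | rfl | rfl
    exacts [absurd p.end_mem_support hyp, rfl, absurd p.start_mem_support hyp]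
  have hxC : x ∈ C.erase c₀ := by
    refine mem_erase.2 ⟨fun h => hxq (h ▸ q.start_mem_support), ?_⟩
    exact (mem_insert.1 (hpw x hxp)).resolve_left fun h => hxq (h ▸ q.end_mem_support)
  exact hs₀ x hxC (hy ▸ hxy.symm)

-- Induction on `C`, removing a simplicial vertex `c₀`; this fails only if some `s₀ ∈ S` sees `C`
-- only at `c₀`, and then `c₀` itself is adjacent to all of `S`.
theorem IsChordal.exists_forall_adj (hG : IsChordal G) {C : Finset V} (hC : G.PreconnectedIn C)
    (hCne : C.Nonempty) (hCS : Disjoint C S) (hS : G.IsClique (S : Set V))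
    (hnbr : ∀ s ∈ S, ∃ c ∈ C, G.Adj s c) : ∃ c ∈ C, ∀ s ∈ S, G.Adj c s := by
  induction C using Finset.strongInduction with
  | H C ih =>
  obtain ⟨c₀, hc₀⟩ := hG.exists_simplicialIn hCne
  by_cases hall : ∀ s ∈ S, ∃ c ∈ C.erase c₀, G.Adj s c
  · rcases S.eq_empty_or_nonempty with rfl | ⟨s, hs⟩
    · exact ⟨c₀, hc₀.1, by simp⟩
    obtain ⟨c, hc, -⟩ := hall s hs
    obtain ⟨c', hc', hc'S⟩ :=
      ih _ (erase_ssubset hc₀.1) (hc₀.preconnectedIn_erase hC) ⟨c, hc⟩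
      (disjoint_of_subset_left (erase_subset _ _) hCS) hall
    exact ⟨c', mem_of_mem_erase hc', hc'S⟩
  push Not at hall
  obtain ⟨s₀, hs₀, hs₀C⟩ := hall
  have hnotC : ∀ s ∈ S, s ∉ C := fun s hs hsC => Finset.disjoint_left.1 hCS hsC hs
  have hs₀c₀ : G.Adj s₀ c₀ := by
    obtain ⟨c, hc, hs₀c⟩ := hnbr s₀ hs₀
    by_contra h
    exact hs₀C c (mem_erase.2 ⟨fun hcc => h (hcc ▸ hs₀c), hc⟩) hs₀c
  refine ⟨c₀, hc₀.1, fun s hs => ?_⟩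
  by_cases hss₀ : s = s₀
  · exact hss₀ ▸ hs₀c₀.symm
  obtain ⟨d, hd, hsd⟩ := hnbr s hs
  exact hG.adj_of_forall_not_adj_erase hC hc₀.1 hd (hnotC s hs) (hnotC s₀ hs₀) hsd
    (hS hs₀ hs (Ne.symm hss₀)) hs₀c₀ hs₀C

namespace IsKTreeRank

theorem exists_isNClique_superset (hr : IsKTreeRank G k A r)
    {Q : Finset V} (hQ : G.IsCliqueIn A Q) : ∃ R ⊆ A, Q ⊆ R ∧ G.IsNClique (k + 1) R := by
  rcases Q.eq_empty_or_nonempty with rfl | hQne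
  · exact ⟨_, filter_subset _ _, empty_subset _, hr.isNClique_base⟩
  obtain ⟨x, hxQ, hxmax⟩ := exists_max_image Q r hQne
  by_cases hx : r x < k + 1
  · exact ⟨_, filter_subset _ _,
      fun y hy => mem_filter.2 ⟨hQ.1 hy, (hxmax y hy).trans_lt hx⟩,
      hr.isNClique_base⟩
  obtain ⟨s, hs, hmem⟩ := hr.exists_isNClique x (hQ.1 hxQ) (not_lt.1 hx)
  have hxs : x ∉ s := fun h => lt_irrefl _ ((hmem x).1 h).2.1
  refine ⟨insert x s, insert_subset (hQ.1 hxQ) fun a ha => ((hmem a).1 ha).1, fun y hy => ?_, ?_,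
    by rw [card_insert_of_notMem hxs, hs.2]⟩
  · by_cases hyx : y = x
    · exact hyx ▸ mem_insert_self x s
    refine mem_insert_of_mem ((hmem y).2 ⟨hQ.1 hy, ?_, hQ.2 hxQ hy (Ne.symm hyx)⟩)
    exact (hxmax y hy).lt_of_ne fun h => hyx (hr.injOn (hQ.1 hy) (hQ.1 hxQ) h)
  · rw [coe_insert]
    exact hs.1.insert fun a ha _ => ((hmem a).1 ha).2.2

theorem card_le_of_isCliqueIn (hr : IsKTreeRank G k A r) {Q : Finset V}
    (hQ : G.IsCliqueIn A Q) : #Q ≤ k + 1 := by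
  obtain ⟨R, -, hQR, hR⟩ := hr.exists_isNClique_superset hQ
  exact hR.2 ▸ card_le_card hQR

theorem card_eq_of_maximal (hr : IsKTreeRank G k A r) {Q : Finset V}
    (hQ : Maximal (G.IsCliqueIn A) Q) : #Q = k + 1 := by
  obtain ⟨R, hRA, hQR, hR⟩ := hr.exists_isNClique_superset hQ.prop
  rw [hQ.eq_of_le ⟨hRA, hR.1⟩ hQR, hR.2]

theorem le_card_of_separatesIn (hr : IsKTreeRank G k A r) (hS : G.SeparatesIn A u v S) :
    k ≤ #S := by
  have key : ∀ {w w'}, G.SeparatesIn A w w' S →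
      (∀ a ∈ G.componentIn (A \ S) w, k + 1 ≤ r a) → k ≤ #S := by
    intro w w' h hbase
    obtain ⟨x, hx, hxmin⟩ :=
      exists_min_image (G.componentIn (A \ S) w) r ⟨w, mem_componentIn_self h.1⟩
    obtain ⟨s, hs, hmem⟩ :=
      hr.exists_isNClique x (mem_sdiff.1 (componentIn_subset hx)).1 (hbase x hx)
    refine hs.2 ▸ card_le_card fun a ha => ?_
    obtain ⟨haA, hlt, hxa⟩ := (hmem a).1 ha
    by_contra haS
    exact (hxmin a (mem_componentIn_of_adj hx hxa (mem_sdiff.2 ⟨haA, haS⟩))).not_gt hlt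
  by_cases hu : ∀ a ∈ G.componentIn (A \ S) u, k + 1 ≤ r a
  · exact key hS hu
  refine key (separatesIn_comm (A := A) ▸ hS) fun b hb => ?_
  push Not at hu
  obtain ⟨a, ha, hra⟩ := hu
  by_contra! hrb
  have hab : a ≠ b := fun h => Finset.disjoint_left.1 hS.disjoint_componentIn ha (h ▸ hb)
  have hbase : ∀ {c w}, c ∈ G.componentIn (A \ S) w → r c < k + 1 →
      c ∈ ({a ∈ A | r a < k + 1} : Finset V) := fun hc hrc =>
    mem_filter.2 ⟨(mem_sdiff.1 (componentIn_subset hc)).1, hrc⟩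
  exact hS.not_adj_of_mem_componentIn ha hb (hr.isNClique_base.1 (hbase ha hra) (hbase hb hrb) hab)

theorem card_le_of_minimal_separatesIn [Fintype V] (hG : IsChordal G)
    (hr : IsKTreeRank G k univ r) (hS : Minimal (G.SeparatesIn univ u v) S) : #S ≤ k := by
  have hScl := hG.isClique_of_minimal_separatesIn hS
  have hCS : Disjoint (G.componentIn (univ \ S) u) S :=
    disjoint_of_subset_left componentIn_subset sdiff_disjoint
  obtain ⟨c, hc, hcS⟩ := hG.exists_forall_adj preconnectedIn_componentIn
    ⟨u, mem_componentIn_self hS.prop.1⟩ hCS hScl fun s hs =>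
      let ⟨c, hc, hcs⟩ := exists_mem_componentIn_adj_of_minimal hS hs; ⟨c, hc, hcs.symm⟩
  have hcS' : c ∉ S := Finset.disjoint_left.1 hCS hc
  have := hr.card_le_of_isCliqueIn (Q := insert c S)
    ⟨subset_univ _, by rw [coe_insert]; exact hScl.insert fun s hs _ => hcS s hs⟩
  rw [card_insert_of_notMem hcS'] at this
  omega

end IsKTreeRank

theorem isKTreeRank_of_isClique (hA : G.IsClique (A : Set V)) (hcard : #A = k + 1) :
    ∃ r, IsKTreeRank G k A r := by
  let r : V → ℕ := fun v => if h : v ∈ A then A.equivFin ⟨v, h⟩ else 0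
  have hr : ∀ a (ha : a ∈ A), r a = A.equivFin ⟨a, ha⟩ := fun a ha => dif_pos ha
  have hlt : ∀ a ∈ A, r a < #A := fun a ha => by
    simp [hr a ha]
  refine ⟨r, ⟨fun a ha b hb h => ?_, hlt, ?_, fun a ha b hb hab _ => ?_,
    fun b hb hkb => ?_⟩⟩
  · rw [hr a ha, hr b hb] at h
    exact congrArg Subtype.val (A.equivFin.injective (Fin.ext h))
  · rw [filter_true_of_mem fun a ha => hcard ▸ hlt a ha, hcard]
  · exact hA ha hb fun h => hab.ne (h ▸ rfl)
  · exact absurd (hlt b hb) (by omega)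

theorem IsKTreeRank.exists_isNClique_update (hr : IsKTreeRank G k A r) (hx : x ∉ A)
    [DecidableRel G.Adj] (hN : G.IsNClique k {a ∈ A | G.Adj x a}) :
    ∀ b ∈ insert x A, k + 1 ≤ Function.update r x #A b → ∃ s, G.IsNClique k s ∧
      ∀ a, a ∈ s ↔ a ∈ insert x A ∧ Function.update r x #A a < Function.update r x #A b ∧
        G.Adj b a := by
  set r' := Function.update r x #A
  have hx' : r' x = #A := by simp [r']
  have ha' : ∀ a ∈ A, r' a = r a := fun a ha => by simp [r', ne_of_mem_of_not_mem ha hx]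
  rw [forall_mem_insert, hx']
  refine ⟨fun _ => ⟨_, hN, fun a => ?_⟩, fun b hb hkb => ?_⟩
  · rw [mem_filter, mem_insert]
    constructor
    · rintro ⟨ha, hxa⟩
      exact ⟨Or.inr ha, ha' a ha ▸ hr.lt_card a ha, hxa⟩
    · rintro ⟨h | ha, -, hxa⟩
      exacts [absurd (h ▸ hxa) (G.loopless.irrefl _), ⟨ha, hxa⟩]
  rw [ha' b hb] at hkb ⊢
  obtain ⟨s, hs, hmem⟩ := hr.exists_isNClique b hb hkb
  refine ⟨s, hs, fun a => ?_⟩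
  rw [hmem, mem_insert]
  constructor
  · rintro ⟨ha, hab, hba⟩
    exact ⟨Or.inr ha, ha' a ha ▸ hab, hba⟩
  · rintro ⟨h | ha, hab, hba⟩
    · have := hr.lt_card b hb
      rw [h, hx'] at hab
      omega
    · exact ⟨ha, ha' a ha ▸ hab, hba⟩

theorem IsKTreeRank.insert (hr : IsKTreeRank G k A r) (hx : x ∉ A) (hk : k + 1 ≤ #A)
    [DecidableRel G.Adj] (hN : G.IsNClique k {a ∈ A | G.Adj x a}) :
    IsKTreeRank G k (insert x A) (Function.update r x #A) := by
  set r' := Function.update r x #A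
  have hx' : r' x = #A := by simp [r']
  have ha' : ∀ a ∈ A, r' a = r a := fun a ha => by simp [r', ne_of_mem_of_not_mem ha hx]
  have hlt : ∀ a ∈ A, r a < #A := hr.lt_card
  refine ⟨?_, ?_, ?_, fun a ha b hb hab hbk => ?_, hr.exists_isNClique_update hx hN⟩
  · rw [coe_insert, Set.injOn_insert (mod_cast hx)]
    refine ⟨hr.injOn.congr fun a ha => (ha' a ha).symm, fun ⟨a, ha, h⟩ => ?_⟩
    have := hlt a ha
    rw [ha' a ha, hx'] at h
    omega
  · rw [card_insert_of_notMem hx, forall_mem_insert, hx']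
    exact ⟨lt_add_one _, fun a ha => by rw [ha' a ha]; exact (hlt a ha).trans (lt_add_one _)⟩
  · rw [filter_insert, if_neg (by omega)]
    exact (congrArg card (filter_congr fun a ha => by rw [ha' a ha])).trans hr.card_base
  · have hb : b ∈ A := (mem_insert.1 hb).resolve_left fun h => by rw [h] at hbk; omega
    have ha : a ∈ A := (mem_insert.1 ha).resolve_left fun h => by rw [h] at hab; omega
    rw [ha' a ha, ha' b hb] at hab
    rw [ha' b hb] at hbk
    exact hr.adj_of_lt a ha b hb hab hbk

theorem IsChordal.exists_forall_adj_filter_adj [DecidableRel G.Adj] (hG : IsChordal G)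
    (hx : G.SimplicialIn A x)
    (hy : y ∈ A) (hyx : y ≠ x) (hxy : ¬ G.Adj x y)
    (hsep : ∀ u v T, Minimal (G.SeparatesIn A u v) T → #T = k)
    (hN : #{a ∈ A | G.Adj x a} = k) :
    ∃ w ∈ A.erase x, w ∉ ({a ∈ A | G.Adj x a} : Finset V) ∧
      ∀ s ∈ {a ∈ A | G.Adj x a}, G.Adj w s := by
  set N : Finset V := {a ∈ A | G.Adj x a}
  have hNsep : G.SeparatesIn A x y N := by
    refine ⟨mem_sdiff.2 ⟨hx.1, by simp [N]⟩, mem_sdiff.2 ⟨hy, by simp [N, hxy]⟩, ?_⟩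
    rintro ⟨p, hp⟩
    obtain ⟨m, hxm, r, rfl⟩ := Walk.exists_eq_cons_of_ne hyx.symm p
    have := mem_sdiff.1 (hp m (by simp))
    exact this.2 (mem_filter.2 ⟨this.1, hxm⟩)
  obtain ⟨T, hTN, hT⟩ := exists_minimal_le_of_wellFoundedLT _ _ hNsep
  have hTeq : T = N := eq_of_subset_of_card_le hTN (by rw [hsep x y T hT, hN])
  subst hTeq
  rw [separatesIn_comm] at hT
  have hCN : Disjoint (G.componentIn (A \ N) y) N :=
    disjoint_of_subset_left componentIn_subset sdiff_disjoint
  obtain ⟨w, hw, hwN⟩ := hG.exists_forall_adj preconnectedIn_componentIn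
    ⟨y, mem_componentIn_self hT.prop.1⟩ hCN (by rw [coe_filter]; exact hx.2) fun s hs =>
      let ⟨c, hc, hcs⟩ := exists_mem_componentIn_adj_of_minimal hT hs; ⟨c, hc, hcs.symm⟩
  refine ⟨w, mem_erase.2 ⟨fun h => hT.prop.notMem_componentIn (h ▸ hw), ?_⟩,
    Finset.disjoint_left.1 hCN hw, hwN⟩
  exact (mem_sdiff.1 (componentIn_subset hw)).1

theorem IsChordal.exists_isKTreeRank (hG : IsChordal G) {A : Finset V} (hA : A.Nonempty)
    (hconn : G.PreconnectedIn A) (hcl : ∀ Q, Maximal (G.IsCliqueIn A) Q → #Q = k + 1)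
    (hsep : ∀ u v T, Minimal (G.SeparatesIn A u v) T → #T = k) :
    ∃ r, IsKTreeRank G k A r := by
  classical
  induction A using Finset.strongInduction with
  | H A ih =>
  by_cases hAcl : G.IsClique (A : Set V)
  · exact isKTreeRank_of_isClique hAcl (hcl A ⟨⟨subset_rfl, hAcl⟩, fun R hR _ => hR.1⟩)
  obtain ⟨x, y, hxy, hnxy, hx, hy⟩ := hG.exists_simplicialIn_pair hAcl
  have hN := hx.card_filter_adj hcl
  obtain ⟨w, hw, hwN, hwadj⟩ :=
    hG.exists_forall_adj_filter_adj hx hy.1 (Ne.symm hxy) hnxy hsep hN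
  have hcl' : ∀ Q, Maximal (G.IsCliqueIn (A.erase x)) Q → #Q = k + 1 :=
    fun Q hQ => hcl Q (hx.maximal_of_erase hw hwN hwadj hQ)
  obtain ⟨r, hr⟩ := ih _ (erase_ssubset hx.1) ⟨y, mem_erase.2 ⟨Ne.symm hxy, hy.1⟩⟩
    (hx.preconnectedIn_erase hconn) hcl'
    fun u v T hT => hsep u v T (hx.minimal_separatesIn_of_erase hT)
  have hk : k + 1 ≤ #(A.erase x) := by
    obtain ⟨R, -, hR⟩ :=
      IsCliqueIn.exists_le_maximal (⟨empty_subset _, by simp⟩ : G.IsCliqueIn (A.erase x) ∅)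
    exact hcl' R hR ▸ card_le_card hR.prop.1
  have hN' : G.IsNClique k {a ∈ A.erase x | G.Adj x a} := by
    rw [filter_erase, erase_eq_of_notMem (by simp)]
    exact ⟨by rw [coe_filter]; exact hx.2, hN⟩
  exact ⟨_, insert_erase hx.1 ▸ hr.insert (notMem_erase x A) hk hN'⟩

end Paper

open Paper in
theorem stmt1 {V : Type} [Fintype V] [DecidableEq V] (k : ℕ) (G : SimpleGraph V)
    (hconn : G.Connected) (hch : IsChordal G) :
    IsKTree k G ↔
      (∀ Q : Finset V, IsMaxClique G Q → Q.card = k + 1) ∧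
        (∀ S : Finset V, IsMinSep G S → S.card = k) := by
  rw [isKTree_iff_exists_isKTreeRank]
  constructor
  · rintro ⟨r, hr⟩
    refine ⟨fun Q hQ => hr.card_eq_of_maximal (isMaxClique_iff_maximal.1 hQ), fun S hS => ?_⟩
    obtain ⟨u, v, hS⟩ := isMinSep_iff.1 hS
    exact (hr.card_le_of_minimal_separatesIn hch hS).antisymm (hr.le_card_of_separatesIn hS.prop)
  · rintro ⟨hQ, hS⟩
    have := hconn.nonempty
    exact hch.exists_isKTreeRank univ_nonempty hconn.preconnectedIn_univ
      (fun Q h => hQ Q (isMaxClique_iff_maximal.2 h))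
      fun u v T h => hS T (isMinSep_iff.2 ⟨u, v, h⟩)
end
end

section
/- A connected chordal graph G is a k-tree if and only if its reduced clique graph C_r(G) is equal (as a graph) to its (k+1)-line graph ℓ_{k+1}(G). -/
open Finset

noncomputable section

/-
In a `k`-tree every clique lies in a `(k+1)`-clique, fewer than `k` vertices never disconnect it,
and a `k`-clique separates any two non-adjacent vertices adjacent to all of it: induct along the
construction order, bypassing the last-added vertex, whose earlier neighbours form a clique. These
three facts give both conditions.

Conversely, a finite chordal graph has a simplicial vertex `z`; its closed neighbourhood `N[z]` is
a maximal clique, so `z` has `k` neighbours. If `N[z]` is not everything, a minimal separator `T`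
of `z` from a non-neighbour is a clique (Dirac) inside `N(z)`, and some vertex on the far side is
adjacent to all of `T`; a maximal clique through it forms a separating pair with `N[z]` meeting it
in `T`. Hence `#T = k`, `T = N(z)`, and some `w ≠ z` is adjacent to all of `N(z)`. With this twin,
`G - z` inherits the hypotheses, is a `k`-tree by induction, and `z` re-attaches to the `k`-clique
`N(z)`.
-/

lemma Finset.sdiff_nonempty_of_card_eq {α : Type*} [DecidableEq α] {s t : Finset α}
    (h : #s = #t) (hne : s ≠ t) : (s \ t).Nonempty :=
  sdiff_nonempty.2 fun hst => hne (eq_of_subset_of_card_le hst h.ge)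

namespace SimpleGraph.Walk

variable {V : Type*} {G : SimpleGraph V} {u v z : V}

/-- An induced path in index form: unlike `IsChordless`, this passes to the prefixes `p.take n`. -/
def IsShortcutFree (p : G.Walk u v) : Prop :=
  ∀ ⦃i j : ℕ⦄, i + 1 < j → j ≤ p.length → ¬ G.Adj (p.getVert i) (p.getVert j)

lemma IsShortcutFree.take {p : G.Walk u v} (hp : p.IsShortcutFree) (n : ℕ) :
    (p.take n).IsShortcutFree := by
  intro i j hij hj
  simp only [take_length, take_getVert] at hj ⊢
  rw [min_eq_right (by omega), min_eq_right (by omega)]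
  exact hp hij (by omega)

lemma IsShortcutFree.not_adj {p : G.Walk u v} (hp : p.IsShortcutFree) (h : 2 ≤ p.length) :
    ¬ G.Adj u v := by
  simpa using hp (i := 0) (j := p.length) (by omega) le_rfl

lemma IsShortcutFree.isChordless {p : G.Walk u v} (hp : p.IsShortcutFree) : p.IsChordless := by
  rw [isChordless_iff_forall_mem_edges]
  intro a b ha hb hab
  obtain ⟨i, rfl, hi⟩ := mem_support_iff_exists_getVert.1 ha
  obtain ⟨j, rfl, hj⟩ := mem_support_iff_exists_getVert.1 hb
  rcases lt_trichotomy j (i + 1) with h | rfl | h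
  · rcases lt_trichotomy (j + 1) i with h' | rfl | h'
    · exact absurd hab.symm (hp h' hi)
    · rw [Sym2.eq_swap]
      exact (mk_mem_edges_iff_exists p).2 ⟨j, by omega, rfl⟩
    · obtain rfl : j = i := by omega
      exact absurd hab G.irrefl
  · exact (mk_mem_edges_iff_exists p).2 ⟨i, by omega, rfl⟩
  · exact absurd hab (hp h hj)

lemma exists_length_lt_of_adj_getVert (p : G.Walk u v) {i j : ℕ} (hij : i + 1 < j)
    (hj : j ≤ p.length) (h : G.Adj (p.getVert i) (p.getVert j)) :
    ∃ q : G.Walk u v, q.support ⊆ p.support ∧ q.length < p.length := by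
  refine ⟨(p.take i).append (cons h (p.drop j)), ?_, ?_⟩
  · intro x hx
    rw [mem_support_append_iff, support_cons, List.mem_cons] at hx
    rcases hx with hx | rfl | hx
    · exact (p.isSubwalk_take i).support_subset hx
    · exact (p.isSubwalk_take i).support_subset (p.take i).end_mem_support
    · exact (p.isSubwalk_drop j).support_subset hx
  · simp only [length_append, take_length, length_cons, drop_length]
    omega

lemma exists_isPath_isShortcutFree (p : G.Walk u v) :
    ∃ q : G.Walk u v, q.IsPath ∧ q.IsShortcutFree ∧ q.support ⊆ p.support := by
  classical
  induction h : p.length using Nat.strong_induction_on generalizing p with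
  | _ n ih =>
  by_cases hq : p.bypass.IsShortcutFree
  · exact ⟨p.bypass, p.bypass_isPath, hq, p.support_bypass_subset_support⟩
  simp only [IsShortcutFree, not_forall, not_not] at hq
  obtain ⟨i, j, hij, hj, hadj⟩ := hq
  obtain ⟨r, hr, hrlen⟩ := p.bypass.exists_length_lt_of_adj_getVert hij hj hadj
  obtain ⟨q, hqp, hqs, hqr⟩ := ih _ (h ▸ hrlen.trans_le p.length_bypass_le_length) r rfl
  exact ⟨q, hqp, hqs, fun x hx => p.support_bypass_subset_support (hr (hqr hx))⟩

lemma IsShortcutFree.notMem_support {p : G.Walk u v} (hp : p.IsPath) (hs : p.IsShortcutFree)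
    (hz : G.IsClique (G.neighborSet z ∩ {x | x ∈ p.support})) (hu : z ≠ u) (hv : z ≠ v) :
    z ∉ p.support := by
  intro hzp
  obtain ⟨i, rfl, hi⟩ := mem_support_iff_exists_getVert.1 hzp
  have hi0 : i ≠ 0 := by rintro rfl; exact hu p.getVert_zero
  have hil : i ≠ p.length := by rintro rfl; exact hv p.getVert_length
  have hprev : G.Adj (p.getVert i) (p.getVert (i - 1)) := by
    simpa [Nat.sub_add_cancel (Nat.pos_of_ne_zero hi0)] using
      (p.adj_getVert_succ (i := i - 1) (by omega)).symm
  have hnext : G.Adj (p.getVert i) (p.getVert (i + 1)) := p.adj_getVert_succ (by omega)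
  have hne : p.getVert (i - 1) ≠ p.getVert (i + 1) := fun h => by
    have := hp.getVert_injOn (by simp; omega) (by simp; omega) h
    omega
  exact hs (by omega) (by omega) <|
    hz ⟨hprev, p.getVert_mem_support _⟩ ⟨hnext, p.getVert_mem_support _⟩ hne

lemma exists_support_subset_notMem (p : G.Walk u v)
    (hz : G.IsClique (G.neighborSet z ∩ {x | x ∈ p.support})) (hu : z ≠ u) (hv : z ≠ v) :
    ∃ q : G.Walk u v, q.support ⊆ p.support ∧ z ∉ q.support := by
  obtain ⟨q, hqp, hqs, hqsub⟩ := p.exists_isPath_isShortcutFree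
  refine ⟨q, hqsub, hqs.notMem_support hqp (hz.subset ?_) hu hv⟩
  exact Set.inter_subset_inter_right _ fun x hx => hqsub hx

end SimpleGraph.Walk

namespace SimpleGraph

variable {V : Type*} {G : SimpleGraph V} {T : Finset V} {a b c u v w : V}

/-- Off `T`, this is the relation of lying in the same component of `G - T`. -/
def ReachableAvoiding (G : SimpleGraph V) (T : Finset V) (u v : V) : Prop :=
  ∃ p : G.Walk u v, ∀ x ∈ p.support, x ∉ T

lemma not_reachableAvoiding_iff :
    ¬ G.ReachableAvoiding T u v ↔ ∀ p : G.Walk u v, ∃ x ∈ p.support, x ∈ T := by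
  simp [ReachableAvoiding]

namespace ReachableAvoiding

lemma refl (hu : u ∉ T) : G.ReachableAvoiding T u u :=
  ⟨.nil, by simpa using hu⟩

lemma right_notMem (h : G.ReachableAvoiding T u v) : v ∉ T :=
  h.elim fun p hp => hp v p.end_mem_support

lemma symm (h : G.ReachableAvoiding T u v) : G.ReachableAvoiding T v u := by
  obtain ⟨p, hp⟩ := h
  exact ⟨p.reverse, fun x hx => hp x (by simpa using hx)⟩

lemma trans (h : G.ReachableAvoiding T u v) (h' : G.ReachableAvoiding T v w) :
    G.ReachableAvoiding T u w := by
  obtain ⟨p, hp⟩ := h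
  obtain ⟨q, hq⟩ := h'
  refine ⟨p.append q, fun x hx => ?_⟩
  rcases (Walk.mem_support_append_iff _ _).1 hx with hx | hx
  exacts [hp x hx, hq x hx]

lemma trans_adj (h : G.ReachableAvoiding T u v) (hvw : G.Adj v w) (hw : w ∉ T) :
    G.ReachableAvoiding T u w :=
  h.trans ⟨hvw.toWalk, by simp [h.right_notMem, hw]⟩

lemma of_walk (h : G.ReachableAvoiding T a u) (p : G.Walk u v) (hp : ∀ x ∈ p.support, x ∉ T) :
    ∀ x ∈ p.support, G.ReachableAvoiding T a x := by
  classical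
  intro x hx
  exact h.trans ⟨p.takeUntil x hx, fun y hy => hp y (p.support_takeUntil_subset_support hx hy)⟩

lemma exists_walk_of_adj (h : G.ReachableAvoiding T u c) (hc : G.Adj c v) :
    ∃ p : G.Walk u v, ∀ x ∈ p.support, x = v ∨ G.ReachableAvoiding T u x := by
  obtain ⟨q, hq⟩ := h
  refine ⟨q.concat hc, fun x hx => ?_⟩
  rw [Walk.support_concat, List.mem_append, List.mem_singleton] at hx
  exact hx.elim (fun hx => .inr (of_walk (refl (hq u q.start_mem_support)) q hq x hx)) .inl

end ReachableAvoiding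

lemma Walk.exists_adj_mem_of_not_reachableAvoiding (p : G.Walk a b) (ha : a ∉ T)
    (hab : ¬ G.ReachableAvoiding T a b) :
    ∃ c, ∃ t ∈ p.support, t ∈ T ∧ G.Adj c t ∧ G.ReachableAvoiding T a c := by
  induction p with
  | nil => exact absurd (.refl ha) hab
  | @cons a d b had q ih =>
    by_cases hd : d ∈ T
    · exact ⟨a, d, by simp, hd, had, .refl ha⟩
    have had' : G.ReachableAvoiding T a d := (ReachableAvoiding.refl ha).trans_adj had hd
    obtain ⟨c, t, ht, htT, hct, hdc⟩ := ih hd fun hdb => hab (had'.trans hdb)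
    exact ⟨c, t, by simp [ht], htT, hct, had'.trans hdc⟩

end SimpleGraph

namespace Paper

open SimpleGraph Walk

variable {V : Type} {G : SimpleGraph V}

section Separators

variable {S T : Finset V} {u v x y : V}

lemma IsUVSeparator.not_reachableAvoiding (h : IsUVSeparator G u v S) :
    ¬ G.ReachableAvoiding S u v :=
  not_reachableAvoiding_iff.2 h.2.2.2.2

lemma isUVSeparator_comm : IsUVSeparator G u v S ↔ IsUVSeparator G v u S := by
  suffices ∀ {u v}, IsUVSeparator G u v S → IsUVSeparator G v u S from ⟨this, this⟩
  rintro u v ⟨huv, hadj, hu, hv, hsep⟩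
  refine ⟨huv.symm, fun h => hadj h.symm, hv, hu, fun p => ?_⟩
  obtain ⟨x, hx, hxS⟩ := hsep p.reverse
  exact ⟨x, by simpa using hx, hxS⟩

lemma minimal_isUVSeparator_comm :
    Minimal (IsUVSeparator G u v) T ↔ Minimal (IsUVSeparator G v u) T := by
  rw [show IsUVSeparator G u v = IsUVSeparator G v u from
    funext fun _ => propext isUVSeparator_comm]

lemma isUVSeparator_neighborFinset [Fintype (G.neighborSet u)] (huv : u ≠ v)
    (hadj : ¬ G.Adj u v) : IsUVSeparator G u v (G.neighborFinset u) := by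
  refine ⟨huv, hadj, by simp, by simpa using hadj, fun p => ⟨p.snd, p.getVert_mem_support 1, ?_⟩⟩
  rw [mem_neighborFinset]
  exact p.adj_snd (not_nil_of_ne huv)

lemma exists_minimal_isUVSeparator_subset (h : IsUVSeparator G u v S) :
    ∃ T ⊆ S, Minimal (IsUVSeparator G u v) T :=
  exists_minimal_le_of_wellFoundedLT _ S h

lemma reachableAvoiding_erase_of_minimal [DecidableEq V] (hT : Minimal (IsUVSeparator G u v) T)
    {t : V} (ht : t ∈ T) : G.ReachableAvoiding (T.erase t) u v := by
  by_contra hreach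
  obtain ⟨huv, hadj, hu, hv, -⟩ := hT.prop
  have hsep : IsUVSeparator G u v (T.erase t) :=
    ⟨huv, hadj, fun h => hu (mem_of_mem_erase h), fun h => hv (mem_of_mem_erase h),
      not_reachableAvoiding_iff.1 hreach⟩
  exact (erase_ssubset ht).not_ge (hT.le_of_le hsep (erase_subset t T))

lemma exists_adj_reachableAvoiding_of_minimal (hT : Minimal (IsUVSeparator G u v) T) {t : V}
    (ht : t ∈ T) : ∃ c, G.Adj c t ∧ G.ReachableAvoiding T u c := by
  classical
  obtain ⟨p, hp⟩ := reachableAvoiding_erase_of_minimal hT ht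
  obtain ⟨c, t', ht'p, ht'T, hct', huc⟩ :=
    p.exists_adj_mem_of_not_reachableAvoiding hT.prop.2.2.1 hT.prop.not_reachableAvoiding
  obtain rfl : t' = t := by
    by_contra hne
    exact hp t' ht'p (mem_erase.2 ⟨hne, ht'T⟩)
  exact ⟨c, hct', huc⟩

lemma exists_isShortcutFree_of_minimal (hT : Minimal (IsUVSeparator G u v) T) (hx : x ∈ T)
    (hy : y ∈ T) (hxy : x ≠ y) (hnxy : ¬ G.Adj x y) :
    ∃ p : G.Walk x y, p.IsPath ∧ p.IsShortcutFree ∧ 2 ≤ p.length ∧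
      ∀ w ∈ p.support, w = x ∨ w = y ∨ G.ReachableAvoiding T u w := by
  obtain ⟨cx, hcx, hucx⟩ := exists_adj_reachableAvoiding_of_minimal hT hx
  obtain ⟨cy, hcy, hucy⟩ := exists_adj_reachableAvoiding_of_minimal hT hy
  obtain ⟨r, hr⟩ := (hucx.symm.trans hucy).exists_walk_of_adj hcy
  obtain ⟨p, hp, hps, hpr⟩ := (cons hcx.symm r).exists_isPath_isShortcutFree
  refine ⟨p, hp, hps, ?_, fun w hw => ?_⟩
  · by_contra! hlen
    interval_cases h : p.length
    · exact hxy (eq_of_length_eq_zero h)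
    · exact hnxy (adj_of_length_eq_one h)
  · rcases List.mem_cons.1 (hpr hw) with rfl | hw
    · exact .inl rfl
    · exact .inr ((hr w hw).imp_right hucx.trans)

end Separators

section Chordal

variable {T : Finset V} {u v x y z : V}

/-- The two paths close up to a cycle of length at least four, whose chord can only join the two
interiors. -/
lemma IsChordal.exists_adj_of_isShortcutFree (hG : IsChordal G) {p : G.Walk u v}
    {q : G.Walk v u} (hp : p.IsPath) (hq : q.IsPath) (hps : p.IsShortcutFree)
    (hqs : q.IsShortcutFree) (hp2 : 2 ≤ p.length) (hq2 : 2 ≤ q.length)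
    (hdisj : p.support.tail.Disjoint q.support.tail) :
    ∃ a ∈ p.support, ∃ b ∈ q.support, a ∉ q.support ∧ b ∉ p.support ∧ G.Adj a b := by
  obtain ⟨a, b, ha, hb, hab, hnot⟩ :=
    hG u (p.append q) (hp.isCycle_append hq hdisj (.inl (by omega))) (by simp; omega)
  have hp' : ∀ {x y}, x ∈ p.support → y ∈ p.support → G.Adj x y →
      s(x, y) ∈ (p.append q).edges := fun hx hy hxy => by
    rw [edges_append]
    exact List.mem_append_left _ (hps.isChordless.mem_edges hx hy hxy)
  have hq' : ∀ {x y}, x ∈ q.support → y ∈ q.support → G.Adj x y →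
      s(x, y) ∈ (p.append q).edges := fun hx hy hxy => by
    rw [edges_append]
    exact List.mem_append_right _ (hqs.isChordless.mem_edges hx hy hxy)
  rcases (mem_support_append_iff _ _).1 ha with ha | ha <;>
    rcases (mem_support_append_iff _ _).1 hb with hb | hb
  · exact (hnot (hp' ha hb hab)).elim
  · exact ⟨a, ha, b, hb, fun h => hnot (hq' h hb hab), fun h => hnot (hp' ha h hab), hab⟩
  · exact ⟨b, hb, a, ha, fun h => hnot (hq' ha h hab), fun h => hnot (hp' h hb hab), hab.symm⟩
  · exact (hnot (hq' ha hb hab)).elim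

lemma IsChordal.induce (hG : IsChordal G) (s : Set V) : IsChordal (G.induce s) := by
  intro v c hc hlen
  let f := (Embedding.induce (G := G) s).toHom
  have hf : Function.Injective f := Subtype.val_injective
  obtain ⟨a, b, ha, hb, hab, hnot⟩ :=
    hG _ (c.map f) ((isCycle_map_iff_of_injective hf).2 hc) (by simpa using hlen)
  rw [Walk.support_map, List.mem_map] at ha hb
  obtain ⟨a, ha, rfl⟩ := ha
  obtain ⟨b, hb, rfl⟩ := hb
  refine ⟨a, b, ha, hb, hab, fun h => hnot ?_⟩
  rw [edges_map]
  exact List.mem_map_of_mem h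

/-- Dirac: two non-adjacent vertices of `T` would be joined by induced paths through the
components of `u` and of `v`, which together form a chordless cycle. -/
lemma IsChordal.isClique_of_minimal (hG : IsChordal G) (hT : Minimal (IsUVSeparator G u v) T) :
    G.IsClique (T : Set V) := by
  intro x hx y hy hxy
  by_contra hnxy
  have hsep := hT.prop.not_reachableAvoiding
  obtain ⟨p, hp, hps, hp2, hpu⟩ := exists_isShortcutFree_of_minimal hT hx hy hxy hnxy
  obtain ⟨q, hq, hqs, hq2, hqv⟩ := exists_isShortcutFree_of_minimal
    (minimal_isUVSeparator_comm.1 hT) hy hx (Ne.symm hxy) fun h => hnxy h.symm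
  have hdisj : p.support.tail.Disjoint q.support.tail := by
    intro w hwp hwq
    have hwx : w ≠ x := fun h =>
      (List.nodup_cons.1 (p.cons_tail_support ▸ hp.support_nodup)).1 (h ▸ hwp)
    have hwy : w ≠ y := fun h =>
      (List.nodup_cons.1 (q.cons_tail_support ▸ hq.support_nodup)).1 (h ▸ hwq)
    have hu := (hpu w (List.mem_of_mem_tail hwp)).resolve_left hwx |>.resolve_left hwy
    have hv := (hqv w (List.mem_of_mem_tail hwq)).resolve_left hwy |>.resolve_left hwx
    exact hsep (hu.trans hv.symm)
  obtain ⟨a, ha, b, hb, haq, hbp, hab⟩ :=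
    hG.exists_adj_of_isShortcutFree hp hq hps hqs hp2 hq2 hdisj
  have hua := (hpu a ha).resolve_left (fun h => haq (h ▸ q.end_mem_support))
    |>.resolve_left (fun h => haq (h ▸ q.start_mem_support))
  have hvb := (hqv b hb).resolve_left (fun h => hbp (h ▸ p.end_mem_support))
    |>.resolve_left (fun h => hbp (h ▸ p.start_mem_support))
  exact hsep ((hua.trans_adj hab hvb.right_notMem).trans hvb.symm)

def IsSimplicial (G : SimpleGraph V) (z : V) : Prop :=
  G.IsClique (G.neighborSet z)

lemma IsSimplicial.of_induce {s : Set V} {z : s} (hz : IsSimplicial (G.induce s) z)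
    (hs : G.neighborSet z ⊆ s) : IsSimplicial G z := by
  intro a ha b hb hab
  exact hz (x := ⟨a, hs ha⟩) (y := ⟨b, hs hb⟩) ha hb (by simpa using hab)

/-- The induction passes to the side of a minimal separator that the clique `C` does not meet. -/
theorem IsChordal.exists_isSimplicial_notMem [Finite V] (hG : IsChordal G) {C : Set V}
    (hC : G.IsClique C) (hCV : C ≠ Set.univ) : ∃ z ∉ C, IsSimplicial G z := by
  induction h : Nat.card V using Nat.strong_induction_on generalizing V with
  | _ n ih =>
  have := Fintype.ofFinite V
  classical
  obtain ⟨a, ha⟩ := (Set.ne_univ_iff_exists_notMem C).1 hCV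
  by_cases hcomplete : ∀ b c : V, b ≠ c → G.Adj b c
  · exact ⟨a, ha, fun b _ c _ hbc => hcomplete b c hbc⟩
  push Not at hcomplete
  obtain ⟨b, c, hbc, hnbc⟩ := hcomplete
  obtain ⟨T, -, hT⟩ := exists_minimal_isUVSeparator_subset (isUVSeparator_neighborFinset hbc hnbc)
  have hsep := hT.prop.not_reachableAvoiding
  have side : ∀ {b c : V}, Minimal (IsUVSeparator G b c) T →
      ∃ z, G.ReachableAvoiding T b z ∧ IsSimplicial G z := by
    intro b c hT
    set s : Set V := {x | G.ReachableAvoiding T b x} ∪ T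
    have hcs : c ∉ s := fun hc => hc.elim hT.prop.not_reachableAvoiding hT.prop.2.2.2.1
    obtain ⟨z, hzT, hz⟩ := ih _ (h ▸ Finite.card_subtype_lt hcs) (hG.induce s)
      (C := Subtype.val ⁻¹' T)
      (fun x hx y hy hxy => hG.isClique_of_minimal hT hx hy (Subtype.val_injective.ne hxy))
      ((Set.ne_univ_iff_exists_notMem _).2 ⟨⟨b, .inl (.refl hT.prop.2.2.1)⟩, hT.prop.2.2.1⟩) rfl
    have hbz : G.ReachableAvoiding T b z := z.2.resolve_right hzT
    refine ⟨z, hbz, hz.of_induce fun x hx => ?_⟩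
    by_cases hxT : x ∈ T
    exacts [.inr hxT, .inl (hbz.trans_adj hx hxT)]
  have hside : (∀ x ∈ C, ¬ G.ReachableAvoiding T b x) ∨ ∀ x ∈ C, ¬ G.ReachableAvoiding T c x := by
    by_contra! hboth
    obtain ⟨⟨x, hxC, hbx⟩, ⟨y, hyC, hcy⟩⟩ := hboth
    have hxy : x ≠ y := fun hxy => hsep (hbx.trans (hxy ▸ hcy.symm))
    exact hsep ((hbx.trans_adj (hC hxC hyC hxy) hcy.right_notMem).trans hcy.symm)
  rcases hside with hb | hc
  · obtain ⟨z, hbz, hz⟩ := side hT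
    exact ⟨z, fun hzC => hb z hzC hbz, hz⟩
  · obtain ⟨z, hcz, hz⟩ := side (minimal_isUVSeparator_comm.1 hT)
    exact ⟨z, fun hzC => hc z hzC hcz, hz⟩

theorem IsChordal.exists_isSimplicial [Finite V] [Nonempty V] (hG : IsChordal G) :
    ∃ z, IsSimplicial G z := by
  obtain ⟨z, -, hz⟩ := hG.exists_isSimplicial_notMem (C := ∅) (by simp) Set.empty_ne_univ
  exact ⟨z, hz⟩

/-- An interior neighbour of `s` on `P` cuts off a shorter such path; at length one, `P.snd = x`. -/
lemma IsChordal.adj_snd_of_isShortcutFree (hG : IsChordal G) {s t x : V} {P : G.Walk t x}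
    (hP : P.IsPath) (hPs : P.IsShortcutFree) (hlen : 1 ≤ P.length) (hs : s ∉ P.support)
    (hst : G.Adj s t) (hsx : G.Adj s x) : G.Adj s P.snd := by
  induction h : P.length using Nat.strong_induction_on generalizing x with
  | _ n ih =>
  rcases Nat.lt_or_ge P.length 2 with h1 | h2
  · rwa [snd, getVert_of_length_le _ (by omega)]
  have hsx' : s ≠ x := fun h => hs (h ▸ P.end_mem_support)
  have hst' : s ≠ t := fun h => hs (h ▸ P.start_mem_support)
  have hxt : x ≠ t := by
    rintro rfl
    have := length_eq_zero_iff.2 (isPath_iff_nil.1 hP)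
    omega
  have htx : ¬ G.Adj x t := fun h => hPs.not_adj h2 h.symm
  let q : G.Walk x t := cons hsx.symm (cons hst nil)
  have hq : q.IsPath := by simp [q, hsx'.symm, hxt, hst']
  have hqs : q.IsShortcutFree := by
    intro i j hij hj
    obtain ⟨rfl, rfl⟩ : i = 0 ∧ j = 2 := by simp [q] at hj; omega
    simpa [q] using htx
  have hdisj : P.support.tail.Disjoint q.support.tail := by
    intro w hwP hwq
    simp only [q, support_cons, support_nil, List.tail_cons, List.mem_cons, List.not_mem_nil,
      or_false] at hwq
    rcases hwq with rfl | rfl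
    · exact hs (List.mem_of_mem_tail hwP)
    · exact (List.nodup_cons.1 (P.cons_tail_support ▸ hP.support_nodup)).1 hwP
  obtain ⟨a, ha, b, hb, haq, hbP, hab⟩ :=
    hG.exists_adj_of_isShortcutFree hP hq hPs hqs h2 (by simp [q]) hdisj
  obtain rfl : b = s := by
    simp only [q, support_cons, support_nil, List.mem_cons, List.not_mem_nil, or_false] at hb
    rcases hb with rfl | rfl | rfl
    exacts [absurd P.end_mem_support hbP, rfl, absurd P.start_mem_support hbP]
  obtain ⟨m, rfl, hm⟩ := mem_support_iff_exists_getVert.1 ha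
  have hm0 : m ≠ 0 := by rintro rfl; exact haq (by simp [q])
  have hml : m ≠ P.length := by rintro rfl; exact haq (by simp [q])
  have := ih m (by omega) (hP.take m) (hPs.take m) (by simp; omega)
    (fun h => hs ((P.isSubwalk_take m).support_subset h)) hab.symm (by simp; omega)
  rwa [snd, take_getVert, min_eq_right (by omega)] at this

/-- A vertex of the component with the most neighbours in `T` works: if it missed `t ∈ T`, the
vertex after `t` on an induced path to it would have more (`adj_snd_of_isShortcutFree`). -/
theorem IsChordal.exists_reachableAvoiding_forall_adj [Fintype V] (hG : IsChordal G)
    (hT : G.IsClique (T : Set V)) (hu : u ∉ T)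
    (hfull : ∀ t ∈ T, ∃ c, G.Adj c t ∧ G.ReachableAvoiding T u c) :
    ∃ x, G.ReachableAvoiding T u x ∧ ∀ t ∈ T, G.Adj x t := by
  classical
  obtain ⟨x, hx, hmax⟩ := ({x | G.ReachableAvoiding T u x} : Finset V).exists_max_image
    (fun x => #{t ∈ T | G.Adj x t}) ⟨u, by simpa using .refl hu⟩
  simp only [mem_filter, mem_univ, true_and] at hx hmax
  refine ⟨x, hx, ?_⟩
  by_contra! ⟨t, ht, hxt⟩
  obtain ⟨c, hct, huc⟩ := hfull t ht
  obtain ⟨W, hW⟩ := (hx.symm.trans huc).exists_walk_of_adj hct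
  obtain ⟨P, hP, hPs, hPW⟩ := W.reverse.exists_isPath_isShortcutFree
  have hPu : ∀ w ∈ P.support, w = t ∨ G.ReachableAvoiding T u w := fun w hw =>
    (hW w (by simpa using hPW hw)).imp_right hx.trans
  have hxt' : x ≠ t := fun h => hx.right_notMem (h ▸ ht)
  have hty : G.Adj t P.snd := P.adj_snd (not_nil_of_ne hxt'.symm)
  have huy : G.ReachableAvoiding T u P.snd :=
    (hPu P.snd (P.getVert_mem_support 1)).resolve_left fun h => by
      rw [h] at hty
      exact G.irrefl hty
  have hsub : insert t {s ∈ T | G.Adj x s} ⊆ {s ∈ T | G.Adj P.snd s} := by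
    intro s hs
    simp only [mem_insert, mem_filter] at hs ⊢
    rcases hs with rfl | ⟨hsT, hxs⟩
    · exact ⟨ht, hty.symm⟩
    have hsP : s ∉ P.support := fun h =>
      ((hPu s h).resolve_left fun hst => hxt (hst ▸ hxs)).right_notMem hsT
    refine ⟨hsT, (hG.adj_snd_of_isShortcutFree hP hPs ?_ hsP ?_ hxs.symm).symm⟩
    · by_contra! h0
      exact hxt' (eq_of_length_eq_zero (p := P) (by omega)).symm
    · exact hT hsT ht fun hst => hxt (hst ▸ hxs)
  have := card_le_card hsub
  rw [card_insert_of_notMem (by simp [hxt])] at this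
  exact absurd (hmax _ huy) (by omega)

end Chordal

section Cliques

variable {n : ℕ} {Q Q' T : Finset V} {u v z : V}

lemma exists_isMaxClique_superset [Finite V] {C : Finset V} (hC : G.IsClique (C : Set V)) :
    ∃ Q, IsMaxClique G Q ∧ C ⊆ Q := by
  obtain ⟨Q, hCQ, hQ⟩ :=
    exists_maximal_ge_of_wellFoundedGT (fun R : Finset V => G.IsClique (R : Set V)) C hC
  exact ⟨Q, ⟨hQ.prop, fun R hR hQR => hQ.eq_of_le hR hQR⟩, hCQ⟩

lemma isMaxClique_iff_isNClique
    (h : ∀ C : Finset V, G.IsClique (C : Set V) → ∃ Q, G.IsNClique n Q ∧ C ⊆ Q) :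
    IsMaxClique G Q ↔ G.IsNClique n Q := by
  constructor
  · rintro ⟨hQ, hmax⟩
    obtain ⟨R, hR, hQR⟩ := h Q hQ
    rwa [hmax R hR.1 hQR]
  · refine fun hQ => ⟨hQ.1, fun R hR hQR => eq_of_subset_of_card_le hQR ?_⟩
    obtain ⟨R', hR', hRR'⟩ := h R hR
    exact hQ.2 ▸ hR'.2 ▸ card_le_card hRR'

lemma exists_isNClique_induce_superset {s : Set V}
    (h : ∀ C : Finset V, G.IsClique (C : Set V) → (∀ x ∈ C, x ∈ s) →
      ∃ Q, G.IsNClique n Q ∧ C ⊆ Q ∧ ∀ x ∈ Q, x ∈ s)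
    {C : Finset s} (hC : (G.induce s).IsClique (C : Set s)) :
    ∃ Q, (G.induce s).IsNClique n Q ∧ C ⊆ Q := by
  classical
  obtain ⟨Q, hQ, hCQ, hQs⟩ := h (C.map (.subtype _)) (by simpa [isClique_induce_iff] using hC)
    (fun x hx => by obtain ⟨y, -, rfl⟩ := mem_map.1 hx; exact y.2)
  refine ⟨Q.subtype (· ∈ s), by rwa [isNClique_induce_iff, subtype_map_of_mem hQs], ?_⟩
  exact fun x hx => mem_subtype.2 (hCQ (mem_map_of_mem _ hx))

variable [DecidableEq V]

lemma IsSimplicial.isMaxClique_insert [Fintype (G.neighborSet z)] (hz : IsSimplicial G z) :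
    IsMaxClique G (insert z (G.neighborFinset z)) := by
  refine ⟨?_, fun R hR hzR => (hzR.antisymm fun x hx => ?_)⟩
  · rw [coe_insert, coe_neighborFinset]
    exact hz.insert fun b hb _ => hb
  · rw [mem_insert, mem_neighborFinset, or_iff_not_imp_left]
    exact fun hxz => hR (hzR (mem_insert_self z _)) hx (Ne.symm hxz)

lemma SeparatingPair.not_reachableAvoiding (h : SeparatingPair G Q Q') (hu : u ∈ Q \ Q')
    (hv : v ∈ Q' \ Q) : ¬ G.ReachableAvoiding (Q ∩ Q') u v :=
  not_reachableAvoiding_iff.2 (h.2.2.2.2 u hu v hv)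

lemma separatingPair_of_reachableAvoiding {a b : V} (hQ : IsMaxClique G Q)
    (hQ' : IsMaxClique G Q') (hne : Q ≠ Q') (hT : Q ∩ Q' = T) (hTne : T.Nonempty)
    (hab : ¬ G.ReachableAvoiding T a b) (ha : ∀ x ∈ Q, x ∉ T → G.ReachableAvoiding T a x)
    (hb : ∀ x ∈ Q', x ∉ T → G.ReachableAvoiding T b x) : SeparatingPair G Q Q' := by
  refine ⟨hQ, hQ', hne, hT ▸ hTne, fun x hx y hy => hT ▸ not_reachableAvoiding_iff.1 ?_⟩
  rw [mem_sdiff] at hx hy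
  have hxT : x ∉ T := hT ▸ fun h => hx.2 (mem_inter.1 h).2
  have hyT : y ∉ T := hT ▸ fun h => hy.2 (mem_inter.1 h).1
  exact fun hxy => hab (((ha x hx.1 hxT).trans hxy).trans (hb y hy.1 hyT).symm)

end Cliques

/-- The ranks are the positions in the construction ordering of `IsKTree`. -/
structure IsKTreeRanking (k : ℕ) (G : SimpleGraph V) (r : V → ℕ) : Prop where
  injective : Function.Injective r
  exists_base : ∃ Q : Finset V, G.IsNClique (k + 1) Q ∧ ∀ x, x ∈ Q ↔ r x < k + 1
  exists_lower : ∀ x, k + 1 ≤ r x →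
    ∃ s : Finset V, G.IsNClique k s ∧ ∀ y, y ∈ s ↔ r y < r x ∧ G.Adj x y

section KTree

variable {k : ℕ} {r : V → ℕ} {Q Q' C : Finset V} {u v : V}

lemma IsKTree.exists_isKTreeRanking [Fintype V] (h : IsKTree k G) :
    ∃ r, IsKTreeRanking k G r := by
  obtain ⟨n, σ, hn, hinit, hatt⟩ := h
  refine ⟨fun x => σ.symm x, Fin.val_injective.comp σ.symm.injective, ?_, fun x hx => ?_⟩
  · refine ⟨univ.map ((Fin.castLEEmb hn).trans σ.toEmbedding), ⟨?_, by simp⟩, fun x => ?_⟩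
    · simp only [coe_map, coe_univ, Set.image_univ]
      rintro _ ⟨i, rfl⟩ _ ⟨j, rfl⟩ hij
      have hij' : (i : ℕ) ≠ j := fun h => hij (by simp [Fin.ext h])
      rcases Nat.lt_or_gt_of_ne hij' with h | h
      · exact hinit _ _ h (by simpa using j.isLt)
      · exact (hinit _ _ h (by simpa using i.isLt)).symm
    · simp only [mem_map, mem_univ, true_and, Function.Embedding.trans_apply,
        Equiv.coe_toEmbedding, Fin.castLEEmb_apply]
      refine ⟨?_, fun hx => ⟨⟨σ.symm x, hx⟩, by simp [Fin.castLE]⟩⟩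
      rintro ⟨i, rfl⟩
      simpa using i.isLt
  · obtain ⟨s, hs, hsmem⟩ := hatt (σ.symm x) hx
    refine ⟨s, hs, fun y => (hsmem y).trans ⟨?_, fun ⟨hy, hxy⟩ => ⟨σ.symm y, hy, by simp, ?_⟩⟩⟩
    · rintro ⟨i, hi, rfl, hxy⟩
      exact ⟨by simpa using hi, by simpa using hxy⟩
    · simpa using hxy

namespace IsKTreeRanking

lemma adj_of_lt (hr : IsKTreeRanking k G r) {x y : V} (hxy : x ≠ y) (hx : r x < k + 1)
    (hy : r y < k + 1) : G.Adj x y := by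
  obtain ⟨Q, hQ, hmem⟩ := hr.exists_base
  exact hQ.1 ((hmem x).2 hx) ((hmem y).2 hy) hxy

lemma exists_isNClique_superset (hr : IsKTreeRanking k G r) (hC : G.IsClique (C : Set V)) :
    ∃ Q, G.IsNClique (k + 1) Q ∧ C ⊆ Q := by
  classical
  obtain ⟨Q₀, hQ₀, hmem⟩ := hr.exists_base
  rcases C.eq_empty_or_nonempty with rfl | hCne
  · exact ⟨Q₀, hQ₀, empty_subset _⟩
  obtain ⟨x, hxC, hxmax⟩ := C.exists_max_image r hCne
  by_cases hx : r x < k + 1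
  · exact ⟨Q₀, hQ₀, fun y hy => (hmem y).2 ((hxmax y hy).trans_lt hx)⟩
  obtain ⟨s, hs, hsmem⟩ := hr.exists_lower x (not_lt.1 hx)
  refine ⟨insert x s, hs.insert fun y hy => ((hsmem y).1 hy).2, fun y hy => ?_⟩
  rcases eq_or_ne y x with rfl | hyx
  · exact mem_insert_self _ _
  · exact mem_insert_of_mem <| (hsmem y).2
      ⟨(hxmax y hy).lt_of_ne (hr.injective.ne hyx), hC hxC hy hyx.symm⟩

lemma card_le_of_isClique (hr : IsKTreeRanking k G r) (hC : G.IsClique (C : Set V)) :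
    #C ≤ k + 1 := by
  obtain ⟨Q, hQ, hCQ⟩ := hr.exists_isNClique_superset hC
  exact hQ.2 ▸ card_le_card hCQ

lemma isMaxClique_iff (hr : IsKTreeRanking k G r) : IsMaxClique G Q ↔ G.IsNClique (k + 1) Q :=
  isMaxClique_iff_isNClique fun _ => hr.exists_isNClique_superset

lemma reachableAvoiding (hr : IsKTreeRanking k G r) {A : Finset V} (hA : #A < k) (hu : u ∉ A)
    (hv : v ∉ A) : G.ReachableAvoiding A u v := by
  induction h : max (r u) (r v) using Nat.strong_induction_on generalizing u v with
  | _ N ih =>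
  wlog hvu : r v ≤ r u generalizing u v
  · exact (this hv hu (by rw [max_comm]; exact h) (by omega)).symm
  rcases eq_or_ne u v with rfl | huv
  · exact .refl hu
  by_cases hk : r u < k + 1
  · exact ⟨(hr.adj_of_lt huv hk (by omega)).toWalk, by simp [hu, hv]⟩
  -- `u` has `k` lower neighbours, so one of them survives the deletion of `A`
  obtain ⟨s, hs, hsmem⟩ := hr.exists_lower u (not_lt.1 hk)
  obtain ⟨w, hws, hwA⟩ := not_subset.1 fun hsA => (card_le_card hsA).not_gt (hs.2 ▸ hA)
  obtain ⟨hwu, huw⟩ := (hsmem w).1 hws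
  have hvu' : r v < r u := hvu.lt_of_ne (hr.injective.ne huv.symm)
  exact ((ReachableAvoiding.refl hu).trans_adj huw hwA).trans (ih _ (by omega) hwA hv rfl)

lemma exists_isNClique_forall_adj (hr : IsKTreeRanking k G r) {z : V} (hz : k + 1 ≤ r z) :
    ∃ s : Finset V, G.IsNClique k s ∧ ∀ y, G.Adj z y → r y ≤ r z → y ∈ s := by
  obtain ⟨s, hs, hsmem⟩ := hr.exists_lower z hz
  exact ⟨s, hs, fun y hzy hy => (hsmem y).2 ⟨hy.lt_of_ne (hr.injective.ne hzy.ne.symm), hzy⟩⟩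

/-- `S` is then the whole lower neighbourhood of `z`. -/
lemma mem_of_forall_adj (hr : IsKTreeRanking k G r) {S : Finset V} (hS : G.IsNClique k S)
    {y z : V} (hz : k + 1 ≤ r z) (hSz : ∀ x ∈ S, G.Adj z x) (hSr : ∀ x ∈ S, r x ≤ r z)
    (hzy : G.Adj z y) (hy : r y ≤ r z) : y ∈ S := by
  obtain ⟨s, hs, hlow⟩ := hr.exists_isNClique_forall_adj hz
  have hSs : S = s := eq_of_subset_of_card_le (fun x hx => hlow x (hSz x hx) (hSr x hx))
    (hs.2.trans hS.2.symm).le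
  exact hSs ▸ hlow y hzy hy

/-- Induction on a bound `N` for the ranks on `p` and on `S`: a vertex of rank `N` inside `p` can
be bypassed, since its neighbours of rank at most `N` form a clique. -/
lemma not_reachableAvoiding (hr : IsKTreeRanking k G r) {S : Finset V} (hS : G.IsNClique k S)
    (huv : u ≠ v) (hadj : ¬ G.Adj u v) (hSu : ∀ x ∈ S, G.Adj u x) (hSv : ∀ x ∈ S, G.Adj v x) :
    ¬ G.ReachableAvoiding S u v := by
  classical
  rintro ⟨p, hp⟩
  suffices ∀ N (p : G.Walk u v), (∀ x ∈ p.support, x ∉ S) → (∀ x ∈ p.support, r x ≤ N) →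
      (∀ x ∈ S, r x ≤ N) → False from
    this ((p.support.toFinset ∪ S).sup r) p hp
      (fun x hx => le_sup (mem_union_left _ (List.mem_toFinset.2 hx)))
      (fun x hx => le_sup (mem_union_right _ hx))
  intro N
  induction N using Nat.strong_induction_on with
  | _ N ih =>
  intro p hp hpN hSN
  have hu := hpN u p.start_mem_support
  have hv := hpN v p.end_mem_support
  by_cases hz : ∃ z, r z = N ∧ (z ∈ p.support ∨ z ∈ S)
  swap
  · push Not at hz
    have hlt : ∀ x, r x ≤ N → r x ≠ N → r x ≤ N - 1 := fun x h1 h2 => by omega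
    have huN : r u ≠ N := fun h => (hz u h).1 p.start_mem_support
    exact ih (N - 1) (by omega) p hp
      (fun x hx => hlt x (hpN x hx) fun h => (hz x h).1 hx)
      (fun x hx => hlt x (hSN x hx) fun h => (hz x h).2 hx)
  obtain ⟨z, rfl, hz⟩ := hz
  rcases lt_or_ge (r z) (k + 1) with hk | hk
  · exact hadj (hr.adj_of_lt huv (by omega) (by omega))
  obtain ⟨s, hs, hlow⟩ := hr.exists_isNClique_forall_adj hk
  rcases hz with hzp | hzS
  swap
  · exact hadj (hs.1 (hlow u (hSu z hzS).symm hu) (hlow v (hSv z hzS).symm hv) huv)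
  rcases eq_or_ne z u with rfl | hzu
  · exact hp _ (p.getVert_mem_support 1) <| hr.mem_of_forall_adj hS hk hSu hSN
      (p.adj_snd (not_nil_of_ne huv)) (hpN _ (p.getVert_mem_support 1))
  rcases eq_or_ne z v with rfl | hzv
  · exact hp _ (p.getVert_mem_support _) <| hr.mem_of_forall_adj hS hk hSv hSN
      (p.adj_penultimate (not_nil_of_ne huv)).symm (hpN _ (p.getVert_mem_support _))
  obtain ⟨q, hqp, hzq⟩ := p.exists_support_subset_notMem
    (hs.1.subset fun y hy => hlow y hy.1 (hpN y hy.2)) hzu hzv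
  have hlt : ∀ x, r x ≤ r z → x ≠ z → r x ≤ r z - 1 := fun x h1 h2 => by
    have := hr.injective.ne h2
    omega
  exact ih (r z - 1) (by omega) q (fun x hx => hp x (hqp hx))
    (fun x hx => hlt x (hpN x (hqp hx)) fun h => hzq (h ▸ hx))
    (fun x hx => hlt x (hSN x hx) fun h => hp z hzp (h ▸ hx))

lemma pos_of_ne (hr : IsKTreeRanking k G r) (hconn : G.Connected) {a b : V} (hab : a ≠ b) :
    0 < k := by
  classical
  obtain ⟨p⟩ := hconn.preconnected a b
  have hadj := p.adj_snd (not_nil_of_ne hab)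
  have := hr.card_le_of_isClique (C := {a, p.snd}) (by simpa using fun _ => hadj)
  rw [card_pair hadj.ne] at this
  omega

variable [DecidableEq V]

lemma card_inter_of_separatingPair (hr : IsKTreeRanking k G r) (h : SeparatingPair G Q Q') :
    #(Q ∩ Q') = k := by
  have ⟨hQ, hQ', hne, _, _⟩ := h
  rw [hr.isMaxClique_iff] at hQ hQ'
  refine le_antisymm ?_ ?_
  · by_contra! hk
    have h1 := eq_of_subset_of_card_le (inter_subset_left (s₂ := Q')) (by rw [hQ.2]; omega)
    have h2 := eq_of_subset_of_card_le (inter_subset_right (s₁ := Q)) (by rw [hQ'.2]; omega)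
    exact hne (h1.symm.trans h2)
  · by_contra! hk
    obtain ⟨u, hu⟩ := sdiff_nonempty_of_card_eq (hQ.2.trans hQ'.2.symm) hne
    obtain ⟨v, hv⟩ := sdiff_nonempty_of_card_eq (hQ'.2.trans hQ.2.symm) hne.symm
    exact h.not_reachableAvoiding hu hv <| hr.reachableAvoiding hk
      (fun h => (mem_sdiff.1 hu).2 (mem_inter.1 h).2)
      (fun h => (mem_sdiff.1 hv).2 (mem_inter.1 h).1)

lemma separatingPair_of_card_inter (hr : IsKTreeRanking k G r) (hconn : G.Connected)
    (hQ : G.IsNClique (k + 1) Q) (hQ' : G.IsNClique (k + 1) Q') (hne : Q ≠ Q')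
    (hk : #(Q ∩ Q') = k) : SeparatingPair G Q Q' := by
  obtain ⟨a, ha⟩ := sdiff_nonempty_of_card_eq (hQ.2.trans hQ'.2.symm) hne
  obtain ⟨b, hb⟩ := sdiff_nonempty_of_card_eq (hQ'.2.trans hQ.2.symm) hne.symm
  have hab : a ≠ b := fun h => (mem_sdiff.1 hb).2 (h ▸ (mem_sdiff.1 ha).1)
  refine ⟨hr.isMaxClique_iff.2 hQ, hr.isMaxClique_iff.2 hQ', hne,
    card_pos.1 (hk ▸ hr.pos_of_ne hconn hab), fun u hu v hv => not_reachableAvoiding_iff.1 ?_⟩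
  rw [mem_sdiff] at hu hv
  have hSu : ∀ x ∈ Q ∩ Q', G.Adj u x := fun x hx =>
    hQ.1 hu.1 (mem_inter.1 hx).1 fun h => hu.2 (h ▸ (mem_inter.1 hx).2)
  have hSv : ∀ x ∈ Q ∩ Q', G.Adj v x := fun x hx =>
    hQ'.1 hv.1 (mem_inter.1 hx).2 fun h => hv.2 (h ▸ (mem_inter.1 hx).1)
  have huv : u ≠ v := fun h => hu.2 (h ▸ hv.1)
  refine hr.not_reachableAvoiding ⟨hQ.1.subset inter_subset_left, hk⟩ huv (fun huv' => ?_)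
    hSu hSv
  have hcl : G.IsClique ((insert u (insert v (Q ∩ Q')) : Finset V) : Set V) := by
    rw [coe_insert, coe_insert]
    refine ((hQ.1.subset inter_subset_left).insert fun b hb _ => hSv b hb).insert ?_
    rintro b (rfl | hb) -
    exacts [huv', hSu b hb]
  have := hr.card_le_of_isClique hcl
  rw [card_insert_of_notMem (by simp [huv, hu.2]), card_insert_of_notMem (by simp [hv.2]),
    hk] at this
  omega

lemma separatingPair_iff (hr : IsKTreeRanking k G r) (hconn : G.Connected) :
    SeparatingPair G Q Q' ↔
      G.IsNClique (k + 1) Q ∧ G.IsNClique (k + 1) Q' ∧ Q ≠ Q' ∧ #(Q ∩ Q') = k :=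
  ⟨fun h => ⟨hr.isMaxClique_iff.1 h.1, hr.isMaxClique_iff.1 h.2.1, h.2.2.1,
      hr.card_inter_of_separatingPair h⟩,
    fun ⟨hQ, hQ', hne, hk⟩ => hr.separatingPair_of_card_inter hconn hQ hQ' hne hk⟩

end IsKTreeRanking

end KTree

section DeleteSimplicial

variable {k : ℕ} {z w : V}

lemma IsSimplicial.connected_induce_compl (hz : IsSimplicial G z) (hconn : G.Connected)
    (hw : w ≠ z) : (G.induce {z}ᶜ).Connected := by
  rw [connected_iff]
  refine ⟨fun a b => ?_, ⟨⟨w, hw⟩⟩⟩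
  obtain ⟨p⟩ := hconn.preconnected a b
  obtain ⟨q, -, hzq⟩ := p.exists_support_subset_notMem (hz.subset Set.inter_subset_left)
    (Ne.symm a.2) (Ne.symm b.2)
  exact ⟨q.induce {z}ᶜ fun x hx (h : x = z) => hzq (h ▸ hx)⟩

lemma IsSimplicial.reachableAvoiding_induce_compl (hz : IsSimplicial G z)
    {T : Finset ↥({z}ᶜ : Set V)} {a b : ↥({z}ᶜ : Set V)}
    (h : G.ReachableAvoiding (T.map (.subtype _)) a b) :
    (G.induce {z}ᶜ).ReachableAvoiding T a b := by
  obtain ⟨p, hp⟩ := h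
  obtain ⟨q, hqp, hzq⟩ := p.exists_support_subset_notMem (hz.subset Set.inter_subset_left)
    (Ne.symm a.2) (Ne.symm b.2)
  have hq : ∀ x ∈ q.support, x ∈ ({z}ᶜ : Set V) := fun x hx (h : x = z) => hzq (h ▸ hx)
  refine ⟨q.induce _ hq, fun x hx hxT => ?_⟩
  rw [support_induce q hq] at hx
  exact hp x (hqp ((List.mem_attachWith _ _).1 hx)) (mem_map_of_mem _ hxT)

lemma IsSimplicial.exists_isNClique_superset_notMem [Finite V] [Fintype (G.neighborSet z)]
    (hz : IsSimplicial G z) (hmax : ∀ Q, IsMaxClique G Q → G.IsNClique (k + 1) Q)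
    (hzk : #(G.neighborFinset z) = k) (hw : ∀ x, G.Adj z x → G.Adj w x) (hwz : w ≠ z)
    {C : Finset V} (hC : G.IsClique (C : Set V)) (hzC : z ∉ C) :
    ∃ Q, G.IsNClique (k + 1) Q ∧ C ⊆ Q ∧ z ∉ Q := by
  classical
  obtain ⟨Q, hQ, hCQ⟩ := exists_isMaxClique_superset hC
  by_cases hzQ : z ∈ Q
  swap
  · exact ⟨Q, hmax Q hQ, hCQ, hzQ⟩
  refine ⟨insert w (G.neighborFinset z), ⟨?_, ?_⟩, fun x hx => ?_, ?_⟩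
  · rw [coe_insert, coe_neighborFinset]
    exact hz.insert fun x hx _ => hw x hx
  · rw [card_insert_of_notMem fun h => G.irrefl (hw w ((mem_neighborFinset _ _ _).1 h)), hzk]
  · exact mem_insert_of_mem <| (mem_neighborFinset _ _ _).2 <|
      hQ.1 hzQ (hCQ hx) fun h => hzC (h ▸ hx)
  · simp [hwz.symm]

lemma IsSimplicial.isMaxClique_induce_compl_iff [Fintype V] [Fintype (G.neighborSet z)]
    (hz : IsSimplicial G z) (hmax : ∀ Q, IsMaxClique G Q → G.IsNClique (k + 1) Q)
    (hzk : #(G.neighborFinset z) = k) (hw : ∀ x, G.Adj z x → G.Adj w x) (hwz : w ≠ z)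
    {Q : Finset ↥({z}ᶜ : Set V)} :
    IsMaxClique (G.induce {z}ᶜ) Q ↔ (G.induce {z}ᶜ).IsNClique (k + 1) Q :=
  isMaxClique_iff_isNClique fun _ => exists_isNClique_induce_superset (s := {z}ᶜ)
    fun _ hC hCs => (hz.exists_isNClique_superset_notMem hmax hzk hw hwz hC fun hzC =>
      hCs z hzC rfl).imp fun _ ⟨hQ, hCQ, hzQ⟩ => ⟨hQ, hCQ, fun x hx (hxz : x = z) => hzQ (hxz ▸ hx)⟩

lemma isKTree_of_isNClique_univ [Fintype V] (h : G.IsNClique (k + 1) (univ : Finset V)) :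
    IsKTree k G := by
  have hcard : Fintype.card V = k + 1 := h.2
  refine ⟨k + 1, (Fintype.equivFinOfCardEq hcard).symm, le_rfl, fun i j hij _ => ?_,
    fun j hj => absurd j.isLt (by omega)⟩
  exact h.1 (mem_coe.2 (mem_univ _)) (mem_coe.2 (mem_univ _))
    ((Fintype.equivFinOfCardEq hcard).symm.injective.ne (Fin.ne_of_lt hij))

variable [DecidableEq V]

/-- A vertex on the side of `b` adjacent to all of `T` lies in a maximal clique `Q'` that meets `Q`
exactly in `T`. -/
theorem IsChordal.exists_separatingPair_inter_eq [Fintype V] (hG : IsChordal G) {a b : V}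
    {T Q : Finset V} (hT : Minimal (IsUVSeparator G a b) T) (hTne : T.Nonempty)
    (hQ : IsMaxClique G Q) (hTQ : T ⊆ Q) (hQa : ∀ x ∈ Q, x ∉ T → G.ReachableAvoiding T a x) :
    ∃ Q', SeparatingPair G Q Q' ∧ Q ∩ Q' = T := by
  have hsep := hT.prop.not_reachableAvoiding
  have hTcl : G.IsClique (T : Set V) := hQ.1.subset hTQ
  obtain ⟨x₀, hx₀, hx₀T⟩ := hG.exists_reachableAvoiding_forall_adj hTcl hT.prop.2.2.2.1
    fun t ht => exists_adj_reachableAvoiding_of_minimal (minimal_isUVSeparator_comm.1 hT) ht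
  obtain ⟨Q', hQ', hQ'sub⟩ := exists_isMaxClique_superset (C := insert x₀ T)
    (by rw [coe_insert]; exact hTcl.insert fun t ht _ => hx₀T t ht)
  have hQ'b : ∀ x ∈ Q', x ∉ T → G.ReachableAvoiding T b x := by
    intro x hx hxT
    rcases eq_or_ne x₀ x with rfl | hne
    · exact hx₀
    · exact hx₀.trans_adj (hQ'.1 (hQ'sub (mem_insert_self _ _)) hx hne) hxT
  have hinter : Q ∩ Q' = T := by
    refine subset_antisymm (fun x hx => ?_) fun x hx =>
      mem_inter.2 ⟨hTQ hx, hQ'sub (mem_insert_of_mem hx)⟩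
    by_contra hxT
    rw [mem_inter] at hx
    exact hsep ((hQa x hx.1 hxT).trans (hQ'b x hx.2 hxT).symm)
  have hne : Q ≠ Q' := fun h => hx₀.right_notMem <|
    hinter ▸ mem_inter.2 ⟨h ▸ hQ'sub (mem_insert_self _ _), hQ'sub (mem_insert_self _ _)⟩
  exact ⟨Q', separatingPair_of_reachableAvoiding hQ hQ' hne hinter hTne hsep hQa hQ'b, hinter⟩

/-- For a minimal separator `T ⊆ N(z)` of `z` from a non-neighbour, the separating pair formed by
`N[z]` and a maximal clique `Q₁` forces `#T = k`, so `T = N(z)`; a vertex of `Q₁ \ T` is the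
required twin of `z`. -/
theorem IsChordal.exists_ne_forall_adj [Fintype V] [Fintype (G.neighborSet z)]
    (hG : IsChordal G) (hconn : G.Connected)
    (hmax : ∀ Q, IsMaxClique G Q → G.IsNClique (k + 1) Q)
    (hsep : ∀ Q Q', SeparatingPair G Q Q' → #(Q ∩ Q') = k)
    (hz : IsSimplicial G z) (hzk : #(G.neighborFinset z) = k) {w₀ : V} (hw₀ : w₀ ≠ z)
    (hzw₀ : ¬ G.Adj z w₀) : ∃ w ≠ z, ∀ x, G.Adj z x → G.Adj w x := by
  set S := G.neighborFinset z
  obtain ⟨T, hTS, hT⟩ :=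
    exists_minimal_isUVSeparator_subset (isUVSeparator_neighborFinset hw₀.symm hzw₀)
  have hzT : z ∉ T := hT.prop.2.2.1
  have hTne : T.Nonempty := by
    obtain ⟨p⟩ := hconn.preconnected z w₀
    obtain ⟨x, -, hx⟩ := not_reachableAvoiding_iff.1 hT.prop.not_reachableAvoiding p
    exact ⟨x, hx⟩
  have hQz : ∀ x ∈ insert z S, x ∉ T → G.ReachableAvoiding T z x := by
    intro x hx hxT
    rcases mem_insert.1 hx with rfl | hx
    · exact .refl hzT
    · exact (ReachableAvoiding.refl hzT).trans_adj ((mem_neighborFinset _ _ _).1 hx) hxT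
  obtain ⟨Q₁, hpair, hinter⟩ := hG.exists_separatingPair_inter_eq hT hTne hz.isMaxClique_insert
    (fun x hx => mem_insert_of_mem (hTS hx)) hQz
  have hTk : #T = k := hinter ▸ hsep _ _ hpair
  have hTS' : T = S := eq_of_subset_of_card_le hTS (by rw [hzk, hTk])
  have hQ₁ := hmax _ hpair.2.1
  obtain ⟨w, hw⟩ := sdiff_nonempty_of_card_lt_card (s := T) (t := Q₁) (by rw [hQ₁.2]; omega)
  obtain ⟨hwQ₁, hwT⟩ := mem_sdiff.1 hw
  have hzQ₁ : z ∉ Q₁ := fun h => hzT (hinter ▸ mem_inter.2 ⟨mem_insert_self z S, h⟩)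
  refine ⟨w, fun h => hzQ₁ (h ▸ hwQ₁), fun x hx => ?_⟩
  have hxT : x ∈ T := hTS' ▸ (mem_neighborFinset _ _ _).2 hx
  have hxQ₁ : x ∈ Q₁ := (mem_inter.1 (hinter.symm ▸ hxT)).2
  exact hQ₁.1 hwQ₁ hxQ₁ fun h => hwT (h ▸ hxT)

lemma IsSimplicial.card_inter_of_separatingPair_induce_compl [Fintype V]
    (hz : IsSimplicial G z) (hmax : ∀ Q, IsMaxClique G Q ↔ G.IsNClique (k + 1) Q)
    (hsep : ∀ Q Q', SeparatingPair G Q Q' → #(Q ∩ Q') = k)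
    (hmax' : ∀ Q, IsMaxClique (G.induce {z}ᶜ) Q → (G.induce {z}ᶜ).IsNClique (k + 1) Q)
    {Q Q' : Finset ↥({z}ᶜ : Set V)} (h : SeparatingPair (G.induce {z}ᶜ) Q Q') :
    #(Q ∩ Q') = k := by
  have hmap : ∀ {R}, IsMaxClique (G.induce {z}ᶜ) R → IsMaxClique G (R.map (.subtype _)) :=
    fun hR => (hmax _).2 ((isNClique_induce_iff _ _ _).1 (hmax' _ hR))
  have ⟨hQ, hQ', hne, hnon, _⟩ := h
  rw [← card_map (.subtype _), map_inter]
  refine hsep _ _ ⟨hmap hQ, hmap hQ', (Finset.map_injective _).ne hne, ?_, fun u hu v hv =>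
    not_reachableAvoiding_iff.1 fun huv => ?_⟩
  · rw [← map_inter]
    exact hnon.map
  simp only [mem_sdiff, mem_map, Function.Embedding.coe_subtype] at hu hv
  obtain ⟨⟨u, hu, rfl⟩, hu'⟩ := hu
  obtain ⟨⟨v, hv, rfl⟩, hv'⟩ := hv
  rw [← map_inter] at huv
  exact h.not_reachableAvoiding (mem_sdiff.2 ⟨hu, fun h => hu' ⟨u, h, rfl⟩⟩)
    (mem_sdiff.2 ⟨hv, fun h => hv' ⟨v, h, rfl⟩⟩) (hz.reachableAvoiding_induce_compl huv)

lemma IsKTree.of_induce_compl [Fintype V] {S : Finset V} (h : IsKTree k (G.induce {z}ᶜ))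
    (hS : G.IsNClique k S) (hSz : ∀ x, x ∈ S ↔ G.Adj z x) : IsKTree k G := by
  obtain ⟨n, σ', hn, hinit, hatt⟩ := h
  let σ : Fin (n + 1) ≃ V :=
    finSuccEquivLast.trans ((Equiv.optionCongr σ').trans (Equiv.optionSubtypeNe z))
  have hσ : ∀ i : Fin n, σ i.castSucc = σ' i := fun i => by simp [σ]; rfl
  have hσz : σ (Fin.last n) = z := by simp [σ]; rfl
  refine ⟨n + 1, σ, by omega, fun i j hij hj => ?_, fun j hj => ?_⟩
  · obtain ⟨i, rfl⟩ := Fin.exists_castSucc_eq.2 (Fin.ne_last_of_lt (Fin.lt_def.2 hij))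
    obtain ⟨j, rfl⟩ := (Fin.exists_castSucc_eq (i := j)).2 (by rintro rfl; simp at hj; omega)
    rw [hσ, hσ]
    exact hinit i j hij hj
  induction j using Fin.lastCases with
  | last =>
    refine ⟨S, hS, fun x => (hSz x).trans ⟨fun hx => ?_, fun ⟨_, _, _, hi⟩ => hσz ▸ hi⟩⟩
    exact ⟨(σ'.symm ⟨x, (G.ne_of_adj hx).symm⟩).castSucc, by simp, by simp [hσ], hσz ▸ hx⟩
  | cast j =>
    obtain ⟨s, hs, hsmem⟩ := hatt j hj
    refine ⟨s.map (.subtype _), (isNClique_induce_iff _ _ _).1 hs, fun x => ?_⟩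
    simp only [mem_map, Function.Embedding.coe_subtype]
    constructor
    · rintro ⟨x, hx, rfl⟩
      obtain ⟨i, hi, rfl, hadj⟩ := (hsmem x).1 hx
      exact ⟨i.castSucc, hi, (hσ i).symm, by rwa [hσ]⟩
    · rintro ⟨i, hi, rfl, hadj⟩
      obtain ⟨i, rfl⟩ := Fin.exists_castSucc_eq.2 (Fin.ne_last_of_lt (Fin.lt_def.2 hi))
      rw [hσ] at hadj ⊢
      exact ⟨σ' i, (hsmem _).2 ⟨i, by simpa using hi, rfl, by rwa [hσ] at hadj⟩, rfl⟩

theorem isKTree_of_forall_separatingPair [Fintype V] (hconn : G.Connected) (hG : IsChordal G)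
    (hmax : ∀ Q, IsMaxClique G Q ↔ G.IsNClique (k + 1) Q)
    (hsep : ∀ Q Q', SeparatingPair G Q Q' → #(Q ∩ Q') = k) : IsKTree k G := by
  induction h : Fintype.card V using Nat.strong_induction_on generalizing V with
  | _ n ih =>
  classical
  have := hconn.nonempty
  obtain ⟨z, hz⟩ := hG.exists_isSimplicial
  have hzk : #(G.neighborFinset z) = k := by
    have := ((hmax _).1 hz.isMaxClique_insert).2
    rw [card_insert_of_notMem (by simp)] at this
    omega
  have hS : G.IsNClique k (G.neighborFinset z) := ⟨by rw [coe_neighborFinset]; exact hz, hzk⟩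
  by_cases hout : ∃ w₀, w₀ ≠ z ∧ ¬ G.Adj z w₀
  · obtain ⟨w₀, hw₀, hzw₀⟩ := hout
    obtain ⟨w, hwz, hw⟩ :=
      hG.exists_ne_forall_adj hconn (fun Q => (hmax Q).1) hsep hz hzk hw₀ hzw₀
    have hmax' := fun Q => hz.isMaxClique_induce_compl_iff (fun Q => (hmax Q).1) hzk hw hwz (Q := Q)
    refine IsKTree.of_induce_compl ?_ hS fun x => mem_neighborFinset _ _ _
    exact ih _ (h ▸ Fintype.card_subtype_lt (x := z) (by simp))
      (hz.connected_induce_compl hconn hwz) (hG.induce _) hmax'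
      (fun Q Q' => hz.card_inter_of_separatingPair_induce_compl hmax hsep fun Q => (hmax' Q).1) rfl
  · push Not at hout
    have huniv : insert z (G.neighborFinset z) = univ := eq_univ_of_forall fun x => by
      rw [mem_insert, mem_neighborFinset, or_iff_not_imp_left]
      exact hout x
    exact isKTree_of_isNClique_univ (huniv ▸ (hmax _).1 hz.isMaxClique_insert)

end DeleteSimplicial

end Paper

open Paper in
theorem stmt6 {V : Type} [Fintype V] [DecidableEq V] (k : ℕ) (G : SimpleGraph V)
    (hconn : G.Connected) (hch : IsChordal G) :
    IsKTree k G ↔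
      ((∀ Q : Finset V, IsMaxClique G Q ↔ G.IsNClique (k + 1) Q) ∧
        ∀ Q Q' : Finset V, SeparatingPair G Q Q' ↔
          (G.IsNClique (k + 1) Q ∧ G.IsNClique (k + 1) Q' ∧ Q ≠ Q' ∧ (Q ∩ Q').card = k)) := by
  constructor
  · intro hk
    obtain ⟨r, hr⟩ := hk.exists_isKTreeRanking
    exact ⟨fun Q => hr.isMaxClique_iff, fun Q Q' => hr.separatingPair_iff hconn⟩
  · rintro ⟨hmax, hsep⟩
    exact isKTree_of_forall_separatingPair hconn hch hmax fun Q Q' h => ((hsep Q Q').1 h).2.2.2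
end
end
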